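/- arXiv:1910.13598 — 9 statements merged into one kernel-verified Lean document; each statement's English description precedes it below -/
import Mathlib

section
/- Let d and p be positive integers, let L ≥ μ > 0, C ≥ 0, σ ≥ 0, B > 0 and η ≥ 0 be real numbers, and let F : ℝ^d → ℝ be differentiable with L-Lipschitz gradient and satisfying the μ-Polyak-Łojasiewicz condition with respect to a value F*. Let x_1, …, x_p ∈ ℝ^d and x̄ = (1/p)∑_{j=1}^p x_j. Let Y_1, …, Y_p be mutually independent, square-integrable random vectors in ℝ^d on a probability space with 𝔼[Y_j] = ∇F(x_j) and 𝔼[‖Y_j − ∇F(x_j)‖²] ≤ C‖∇F(x_j)‖² + σ²/B for each j. Then 𝔼[F(x̄ − η·(1/p)∑_{j=1}^p Y_j)] − F* ≤ (1 − μη)(F(x̄) − F*) + Lη²σ²/(2pB) + (η/(2p))·(Lη(C/p + 1) − 1)·∑_{j=1}^p ‖∇F(x_j)‖² + (ηL²/(2p))·∑_{j=1}^p ‖x̄ − x_j‖². -/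
/-!
The descent lemma `F y ≤ F x + ⟪∇F x, y - x⟫ + L/2 ‖y - x‖²`, applied at `y = x̄ - η Ȳ` for the
averaged stochastic gradient `Ȳ` and integrated, bounds the expectation by
`F x̄ - η ⟪∇F x̄, ḡ⟫ + L η²/2 𝔼‖Ȳ‖²`, where `ḡ = 𝔼 Ȳ` is the average of the `∇F (x j)`.
The second moment splits as `𝔼‖Ȳ - ḡ‖² + ‖ḡ‖²`; by independence the noise term is
`p⁻² ∑ 𝔼‖Y j - ∇F (x j)‖²`, and `‖ḡ‖² ≤ p⁻¹ ∑ ‖∇F (x j)‖²` by Cauchy–Schwarz. Polarization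
`2⟪a, b⟫ = ‖a‖² + ‖b‖² - ‖a - b‖²` with `‖∇F x̄ - ∇F (x j)‖ ≤ L ‖x̄ - x j‖` bounds the inner
product from below, and the PL inequality at `x̄` trades `η/2 ‖∇F x̄‖²` for `μ η (F x̄ - F*)`.
-/

open MeasureTheory ProbabilityTheory
open scoped RealInnerProductSpace

section Sums

variable {ι E : Type*} [SeminormedAddCommGroup E]

theorem norm_inv_card_smul_sum_sq_le [NormedSpace ℝ E] (s : Finset ι) (v : ι → E) :
    ‖(s.card : ℝ)⁻¹ • ∑ i ∈ s, v i‖ ^ 2 ≤ (s.card : ℝ)⁻¹ * ∑ i ∈ s, ‖v i‖ ^ 2 := by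
  have hCS : ‖∑ i ∈ s, v i‖ ^ 2 ≤ s.card * ∑ i ∈ s, ‖v i‖ ^ 2 :=
    (pow_le_pow_left₀ (norm_nonneg _) (norm_sum_le s v) 2).trans sq_sum_le_card_mul_sum_sq
  rw [norm_smul, mul_pow, norm_inv, Real.norm_natCast]
  rcases eq_or_ne (s.card : ℝ) 0 with hs | hs
  · simp [hs]
  · calc (s.card : ℝ)⁻¹ ^ 2 * ‖∑ i ∈ s, v i‖ ^ 2
        ≤ (s.card : ℝ)⁻¹ ^ 2 * (s.card * ∑ i ∈ s, ‖v i‖ ^ 2) := by gcongr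
      _ = (s.card : ℝ)⁻¹ * ∑ i ∈ s, ‖v i‖ ^ 2 := by field_simp

theorem two_mul_sum_inner_eq [InnerProductSpace ℝ E] (s : Finset ι) (a : E) (b : ι → E) :
    2 * ∑ i ∈ s, ⟪a, b i⟫
      = s.card * ‖a‖ ^ 2 + ∑ i ∈ s, ‖b i‖ ^ 2 - ∑ i ∈ s, ‖a - b i‖ ^ 2 := by
  simp only [norm_sub_sq_real, Finset.mul_sum, Finset.sum_sub_distrib, Finset.sum_add_distrib,
    Finset.sum_const, nsmul_eq_mul]
  ring

end Sums

section Smooth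

variable {E : Type*} [NormedAddCommGroup E] [InnerProductSpace ℝ E] [CompleteSpace E]

theorem apply_le_add_inner_gradient_add_sq {F : E → ℝ} {L : ℝ} (hF : Differentiable ℝ F)
    (hlip : ∀ x y, ‖gradient F x - gradient F y‖ ≤ L * ‖x - y‖) (x y : E) :
    F y ≤ F x + ⟪gradient F x, y - x⟫ + L / 2 * ‖y - x‖ ^ 2 := by
  set v := y - x
  set ψ : ℝ → ℝ := fun t => F (x + t • v) - t * ⟪gradient F x, v⟫ - L / 2 * ‖v‖ ^ 2 * t ^ 2
  have hψ : ∀ t, HasDerivAt ψ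
      (⟪gradient F (x + t • v) - gradient F x, v⟫ - L * t * ‖v‖ ^ 2) t := by
    intro t
    have hline : HasDerivAt (fun s : ℝ => x + s • v) v t := by
      simpa using ((hasDerivAt_id t).smul_const v).const_add x
    have hFline := (hF (x + t • v)).hasGradientAt.hasFDerivAt.comp_hasDerivAt t hline
    rw [InnerProductSpace.toDual_apply_apply] at hFline
    refine ((hFline.sub ((hasDerivAt_id t).mul_const ⟪gradient F x, v⟫)).sub
      ((hasDerivAt_pow 2 t).const_mul (L / 2 * ‖v‖ ^ 2))).congr_deriv ?_
    rw [inner_sub_left]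
    ring
  -- `ψ' t ≤ 0` for `t > 0` is the Lipschitz bound on the gradient along the segment.
  have hanti : AntitoneOn ψ (Set.Ici 0) := by
    refine antitoneOn_of_hasDerivWithinAt_nonpos (convex_Ici 0)
      (fun t _ => (hψ t).continuousAt.continuousWithinAt)
      (fun t _ => (hψ t).hasDerivWithinAt) fun t ht => ?_
    rw [interior_Ici, Set.mem_Ioi] at ht
    have hgrad := hlip (x + t • v) x
    rw [add_sub_cancel_left, norm_smul, Real.norm_of_nonneg ht.le] at hgrad
    calc ⟪gradient F (x + t • v) - gradient F x, v⟫ - L * t * ‖v‖ ^ 2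
        ≤ ‖gradient F (x + t • v) - gradient F x‖ * ‖v‖ - L * t * ‖v‖ ^ 2 := by
          gcongr; exact real_inner_le_norm _ _
      _ ≤ L * (t * ‖v‖) * ‖v‖ - L * t * ‖v‖ ^ 2 := by gcongr
      _ = 0 := by ring
  have h01 := hanti Set.self_mem_Ici (Set.mem_Ici.2 zero_le_one) zero_le_one
  simp only [ψ, v, one_smul, zero_smul, add_zero, add_sub_cancel] at h01
  linarith

theorem le_two_mul_inner_gradient_average {ι : Type*} {F : E → ℝ} {L : ℝ}
    (hlip : ∀ x y, ‖gradient F x - gradient F y‖ ≤ L * ‖x - y‖) {s : Finset ι}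
    (hs : s.Nonempty) (y : E) (x : ι → E) :
    ‖gradient F y‖ ^ 2 + (s.card : ℝ)⁻¹ * ∑ i ∈ s, ‖gradient F (x i)‖ ^ 2
        - L ^ 2 * (s.card : ℝ)⁻¹ * ∑ i ∈ s, ‖y - x i‖ ^ 2
      ≤ 2 * ⟪gradient F y, (s.card : ℝ)⁻¹ • ∑ i ∈ s, gradient F (x i)⟫ := by
  have hcard : (s.card : ℝ) ≠ 0 := by simp [hs.ne_empty]
  have hdev : ∑ i ∈ s, ‖gradient F y - gradient F (x i)‖ ^ 2 ≤ L ^ 2 * ∑ i ∈ s, ‖y - x i‖ ^ 2 := by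
    rw [Finset.mul_sum]
    gcongr with i
    rw [← mul_pow]
    gcongr
    exact hlip _ _
  have hdev' := mul_le_mul_of_nonneg_left hdev (inv_nonneg.2 (Nat.cast_nonneg s.card))
  calc ‖gradient F y‖ ^ 2 + (s.card : ℝ)⁻¹ * ∑ i ∈ s, ‖gradient F (x i)‖ ^ 2
        - L ^ 2 * (s.card : ℝ)⁻¹ * ∑ i ∈ s, ‖y - x i‖ ^ 2
      ≤ (s.card : ℝ)⁻¹ * (s.card * ‖gradient F y‖ ^ 2 + ∑ i ∈ s, ‖gradient F (x i)‖ ^ 2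
          - ∑ i ∈ s, ‖gradient F y - gradient F (x i)‖ ^ 2) := by
        rw [mul_sub, mul_add, inv_mul_cancel_left₀ hcard]
        linarith
    _ = 2 * ⟪gradient F y, (s.card : ℝ)⁻¹ • ∑ i ∈ s, gradient F (x i)⟫ := by
        rw [real_inner_smul_right, inner_sum, ← two_mul_sum_inner_eq]
        ring

theorem integral_apply_sub_smul_le {Ω : Type*} [MeasurableSpace Ω] {μ : Measure Ω}
    [IsProbabilityMeasure μ] {F : E → ℝ} {L c : ℝ} (hF : Differentiable ℝ F)
    (hlip : ∀ x y, ‖gradient F x - gradient F y‖ ≤ L * ‖x - y‖) (hlb : ∀ y, c ≤ F y)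
    (x : E) (η : ℝ) {V : Ω → E} (hV : MemLp V 2 μ) :
    ∫ ω, F (x - η • V ω) ∂μ
      ≤ F x - η * ⟪gradient F x, μ[V]⟫ + L / 2 * η ^ 2 * ∫ ω, ‖V ω‖ ^ 2 ∂μ := by
  have hVint : Integrable V μ := hV.integrable one_le_two
  have hpt : ∀ ω, F (x - η • V ω)
      ≤ F x - η * ⟪gradient F x, V ω⟫ + L / 2 * η ^ 2 * ‖V ω‖ ^ 2 := fun ω => by
    have := apply_le_add_inner_gradient_add_sq hF hlip x (x - η • V ω)
    rwa [sub_sub_cancel_left, inner_neg_right, real_inner_smul_right, norm_neg, norm_smul,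
      mul_pow, Real.norm_eq_abs, sq_abs, ← sub_eq_add_neg, ← mul_assoc] at this
  have hinner : Integrable (fun ω => η * ⟪gradient F x, V ω⟫) μ :=
    (hVint.const_inner _).const_mul η
  have hsq : Integrable (fun ω => L / 2 * η ^ 2 * ‖V ω‖ ^ 2) μ :=
    ((memLp_two_iff_integrable_sq_norm hV.1).1 hV).const_mul _
  have hlin : Integrable (fun ω => F x - η * ⟪gradient F x, V ω⟫) μ :=
    (integrable_const _).sub hinner
  -- `F` is not assumed integrable along the step: it is squeezed between `c` and the bound `hpt`.
  have hFint : Integrable (fun ω => F (x - η • V ω)) μ :=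
    integrable_of_le_of_le
      (hF.continuous.comp_aestronglyMeasurable (aestronglyMeasurable_const.sub (hV.1.const_smul η)))
      (ae_of_all _ fun ω => hlb _) (ae_of_all _ hpt) (integrable_const c) (hlin.add hsq)
  calc ∫ ω, F (x - η • V ω) ∂μ
      ≤ ∫ ω, (F x - η * ⟪gradient F x, V ω⟫ + L / 2 * η ^ 2 * ‖V ω‖ ^ 2) ∂μ :=
        integral_mono hFint (hlin.add hsq) hpt
    _ = F x - η * ⟪gradient F x, μ[V]⟫ + L / 2 * η ^ 2 * ∫ ω, ‖V ω‖ ^ 2 ∂μ := by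
        rw [integral_add hlin hsq, integral_sub (integrable_const _) hinner, integral_const,
          integral_const_mul, integral_const_mul, integral_inner hVint]
        simp only [probReal_univ, one_smul]

end Smooth

section Moments

variable {Ω E : Type*} [MeasurableSpace Ω] {μ : Measure Ω}
  [NormedAddCommGroup E] [InnerProductSpace ℝ E] [CompleteSpace E]

theorem integral_norm_sq_eq_integral_norm_sub_integral_sq_add [IsProbabilityMeasure μ]
    {X : Ω → E} (hX : MemLp X 2 μ) :
    ∫ ω, ‖X ω‖ ^ 2 ∂μ = ∫ ω, ‖X ω - μ[X]‖ ^ 2 ∂μ + ‖μ[X]‖ ^ 2 := by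
  have hXint : Integrable X μ := hX.integrable one_le_two
  have hsq : Integrable (fun ω => ‖X ω‖ ^ 2) μ := (memLp_two_iff_integrable_sq_norm hX.1).1 hX
  have hcross : Integrable (fun ω => 2 * ⟪μ[X], X ω⟫) μ := (hXint.const_inner _).const_mul 2
  simp_rw [norm_sub_sq_real, real_inner_comm μ[X]]
  have hdiff : Integrable (fun ω => ‖X ω‖ ^ 2 - 2 * ⟪μ[X], X ω⟫) μ := hsq.sub hcross
  rw [integral_add hdiff (integrable_const _), integral_sub hsq hcross,
    integral_const_mul, integral_inner hXint, real_inner_self_eq_norm_sq, integral_const]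
  simp only [probReal_univ, one_smul]
  ring

theorem integral_norm_sum_sq_of_pairwise_indepFun [IsFiniteMeasure μ] [MeasurableSpace E]
    [BorelSpace E] {ι : Type*} [Fintype ι] {Z : ι → Ω → E}
    (hindep : Pairwise fun i j => IndepFun (Z i) (Z j) μ) (hZ : ∀ i, MemLp (Z i) 2 μ)
    (hmean : ∀ i, μ[Z i] = 0) :
    ∫ ω, ‖∑ i, Z i ω‖ ^ 2 ∂μ = ∑ i, ∫ ω, ‖Z i ω‖ ^ 2 ∂μ := by
  classical
  have hint : ∀ i, Integrable (Z i) μ := fun i => (hZ i).integrable one_le_two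
  -- Independent centred vectors are orthogonal in `L²`: `𝔼⟪Z i, Z j⟫ = ⟪𝔼 Z i, 𝔼 Z j⟫ = 0`.
  have hpair : ∀ i j, Integrable (fun ω => ⟪Z i ω, Z j ω⟫) μ ∧
      ∫ ω, ⟪Z i ω, Z j ω⟫ ∂μ = if i = j then ∫ ω, ‖Z i ω‖ ^ 2 ∂μ else 0 := by
    intro i j
    rcases eq_or_ne i j with rfl | hij
    · simp only [real_inner_self_eq_norm_sq, ↓reduceIte, and_true]
      exact (memLp_two_iff_integrable_sq_norm (hZ i).1).1 (hZ i)
    · refine ⟨(hindep hij).integrable_bilin (hint i) (hint j) (innerSL ℝ), ?_⟩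
      rw [if_neg hij]
      have hbilin := (hindep hij).integral_bilin (hint i) (hint j) (innerSL ℝ)
      rwa [hmean, hmean, map_zero] at hbilin
  have hexpand : ∀ ω, ‖∑ i, Z i ω‖ ^ 2 = ∑ i, ∑ j, ⟪Z i ω, Z j ω⟫ := fun ω => by
    simp_rw [← real_inner_self_eq_norm_sq, sum_inner, inner_sum]
  simp_rw [hexpand]
  rw [integral_finsetSum _ fun i _ => integrable_finsetSum _ fun j _ => (hpair i j).1]
  refine Finset.sum_congr rfl fun i _ => ?_
  rw [integral_finsetSum _ fun j _ => (hpair i j).1]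
  simp_rw [fun j => (hpair i j).2, Finset.sum_ite_eq, Finset.mem_univ, if_true]

theorem integral_norm_smul_sum_sub_sq_of_iIndepFun [IsProbabilityMeasure μ] [MeasurableSpace E]
    [BorelSpace E] {ι : Type*} [Fintype ι] {Y : ι → Ω → E} (hindep : iIndepFun Y μ)
    (hY : ∀ i, MemLp (Y i) 2 μ) (c : ℝ) :
    ∫ ω, ‖c • ∑ i, Y i ω - c • ∑ i, μ[Y i]‖ ^ 2 ∂μ
      = c ^ 2 * ∑ i, ∫ ω, ‖Y i ω - μ[Y i]‖ ^ 2 ∂μ := by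
  have hcentred : ∫ ω, ‖∑ i, (Y i ω - μ[Y i])‖ ^ 2 ∂μ = ∑ i, ∫ ω, ‖Y i ω - μ[Y i]‖ ^ 2 ∂μ := by
    refine integral_norm_sum_sq_of_pairwise_indepFun (Z := fun i ω => Y i ω - μ[Y i])
      (fun i j hij => ?_) (fun i => (hY i).sub (memLp_const _)) fun i => ?_
    · exact (hindep.comp (fun i v => v - μ[Y i])
        fun i => (continuous_sub_right _).measurable).indepFun hij
    · rw [integral_sub ((hY i).integrable one_le_two) (integrable_const _), integral_const]
      simp
  simp_rw [← smul_sub, ← Finset.sum_sub_distrib, norm_smul, mul_pow, Real.norm_eq_abs, sq_abs]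
  rw [integral_const_mul, hcentred]

theorem integral_norm_average_sub_sq_le_of_iIndepFun [IsProbabilityMeasure μ]
    [MeasurableSpace E] [BorelSpace E] {ι : Type*} [Fintype ι] {Y : ι → Ω → E}
    (hindep : iIndepFun Y μ) (hY : ∀ i, MemLp (Y i) 2 μ) {C v : ℝ}
    (hvar : ∀ i, ∫ ω, ‖Y i ω - μ[Y i]‖ ^ 2 ∂μ ≤ C * ‖μ[Y i]‖ ^ 2 + v) :
    ∫ ω, ‖(Fintype.card ι : ℝ)⁻¹ • ∑ i, Y i ω - (Fintype.card ι : ℝ)⁻¹ • ∑ i, μ[Y i]‖ ^ 2 ∂μ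
      ≤ (Fintype.card ι : ℝ)⁻¹ ^ 2 * C * ∑ i, ‖μ[Y i]‖ ^ 2 + (Fintype.card ι : ℝ)⁻¹ * v := by
  set n : ℝ := (Fintype.card ι : ℝ)
  have hsum : ∑ i, ∫ ω, ‖Y i ω - μ[Y i]‖ ^ 2 ∂μ ≤ C * ∑ i, ‖μ[Y i]‖ ^ 2 + n * v := by
    simpa only [Finset.sum_add_distrib, ← Finset.mul_sum, Finset.sum_const, Finset.card_univ,
      nsmul_eq_mul] using Finset.sum_le_sum fun i (_ : i ∈ Finset.univ) => hvar i
  rw [integral_norm_smul_sum_sub_sq_of_iIndepFun hindep hY]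
  rcases eq_or_ne n 0 with hn | hn
  · simp [hn]
  · exact (mul_le_mul_of_nonneg_left hsum (by positivity)).trans_eq (by field_simp)

end Moments

theorem lupa_one_step_descent_general
    (d p : ℕ) (hp : 0 < p)
    (L μ C σ B η : ℝ) (hμ : 0 < μ) (hLμ : μ ≤ L) (hη : 0 ≤ η)
    (F : EuclideanSpace ℝ (Fin d) → ℝ) (Fstar : ℝ)
    (hdiff : Differentiable ℝ F)
    (hlip : ∀ x y : EuclideanSpace ℝ (Fin d),
      ‖gradient F x - gradient F y‖ ≤ L * ‖x - y‖)
    (hlb : ∀ x : EuclideanSpace ℝ (Fin d), Fstar ≤ F x)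
    (hPL : ∀ x : EuclideanSpace ℝ (Fin d),
      μ * (F x - Fstar) ≤ (1 / 2) * ‖gradient F x‖ ^ 2)
    (x : Fin p → EuclideanSpace ℝ (Fin d))
    (xbar : EuclideanSpace ℝ (Fin d))
    (Ω : Type*) [MeasureSpace Ω] [IsProbabilityMeasure (ℙ : Measure Ω)]
    (Y : Fin p → Ω → EuclideanSpace ℝ (Fin d))
    (hindep : iIndepFun Y ℙ)
    (hL2 : ∀ j, MemLp (Y j) 2 ℙ)
    (hmean : ∀ j, (∫ ω, Y j ω) = gradient F (x j))
    (hvar : ∀ j, (∫ ω, ‖Y j ω - gradient F (x j)‖ ^ 2)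
      ≤ C * ‖gradient F (x j)‖ ^ 2 + σ ^ 2 / B) :
    (∫ ω, F (xbar - η • ((p : ℝ)⁻¹ • ∑ j, Y j ω))) - Fstar
      ≤ (1 - μ * η) * (F xbar - Fstar)
        + L * η ^ 2 * σ ^ 2 / (2 * p * B)
        + (η / (2 * p)) * (L * η * (C / p + 1) - 1) * ∑ j, ‖gradient F (x j)‖ ^ 2
        + (η * L ^ 2 / (2 * p)) * ∑ j, ‖xbar - x j‖ ^ 2 := by
  have hL : 0 ≤ L := hμ.le.trans hLμ
  set A := ∑ j, ‖gradient F (x j)‖ ^ 2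
  set D := ∑ j, ‖xbar - x j‖ ^ 2
  set gbar := (p : ℝ)⁻¹ • ∑ j, gradient F (x j)
  set Ybar : Ω → EuclideanSpace ℝ (Fin d) := fun ω => (p : ℝ)⁻¹ • ∑ j, Y j ω
  have hYbar : MemLp Ybar 2 ℙ := (memLp_finsetSum _ fun j _ => hL2 j).const_smul (p : ℝ)⁻¹
  have hYbar_mean : ℙ[Ybar] = gbar := by
    rw [integral_smul, integral_finsetSum _ fun j _ => (hL2 j).integrable one_le_two]
    simp only [hmean, gbar]
  have hnoise : ∫ ω, ‖Ybar ω - gbar‖ ^ 2 ≤ (p : ℝ)⁻¹ ^ 2 * C * A + (p : ℝ)⁻¹ * (σ ^ 2 / B) := by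
    simpa only [hmean, Fintype.card_fin] using
      integral_norm_average_sub_sq_le_of_iIndepFun hindep hL2 (by simpa only [hmean] using hvar)
  have hbias : ‖gbar‖ ^ 2 ≤ (p : ℝ)⁻¹ * A := by
    simpa only [Finset.card_univ, Fintype.card_fin] using
      norm_inv_card_smul_sum_sq_le Finset.univ fun j => gradient F (x j)
  have hinner : ‖gradient F xbar‖ ^ 2 + (p : ℝ)⁻¹ * A - L ^ 2 * (p : ℝ)⁻¹ * D
      ≤ 2 * ⟪gradient F xbar, gbar⟫ := by
    simpa only [Finset.card_univ, Fintype.card_fin] using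
      le_two_mul_inner_gradient_average hlip (Finset.univ_nonempty_iff.2 ⟨⟨0, hp⟩⟩) xbar x
  have hdescent := integral_apply_sub_smul_le hdiff hlip hlb xbar η hYbar
  rw [integral_norm_sq_eq_integral_norm_sub_integral_sq_add hYbar, hYbar_mean] at hdescent
  have hPLx := hPL xbar
  linear_combination hdescent + η / 2 * hinner + L * η ^ 2 / 2 * (hnoise + hbias) + η * hPLx

/-- Per-iteration expected descent inequality for one step of local
SGD with model averaging: each worker `j` holds a local model `x j` and an unbiased
stochastic gradient `Y j` with relative-plus-additive variance bound, and the averaged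
model `x̄` is updated by one stochastic gradient step. -/
theorem lupa_one_step_descent
    (d p : ℕ) (hd : 0 < d) (hp : 0 < p)
    (L μ C σ B η : ℝ) (hμ : 0 < μ) (hLμ : μ ≤ L) (hC : 0 ≤ C) (hσ : 0 ≤ σ)
    (hB : 0 < B) (hη : 0 ≤ η)
    (F : EuclideanSpace ℝ (Fin d) → ℝ) (Fstar : ℝ)
    (hdiff : Differentiable ℝ F)
    (hlip : ∀ x y : EuclideanSpace ℝ (Fin d),
      ‖gradient F x - gradient F y‖ ≤ L * ‖x - y‖)
    (hlb : ∀ x : EuclideanSpace ℝ (Fin d), Fstar ≤ F x)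
    (hPL : ∀ x : EuclideanSpace ℝ (Fin d),
      μ * (F x - Fstar) ≤ (1 / 2) * ‖gradient F x‖ ^ 2)
    (x : Fin p → EuclideanSpace ℝ (Fin d))
    (xbar : EuclideanSpace ℝ (Fin d)) (hxbar : xbar = (p : ℝ)⁻¹ • ∑ j, x j)
    (Ω : Type*) [MeasureSpace Ω] [IsProbabilityMeasure (ℙ : Measure Ω)]
    (Y : Fin p → Ω → EuclideanSpace ℝ (Fin d))
    (hindep : iIndepFun Y ℙ)
    (hL2 : ∀ j, MemLp (Y j) 2 ℙ)
    (hmean : ∀ j, (∫ ω, Y j ω) = gradient F (x j))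
    (hvar : ∀ j, (∫ ω, ‖Y j ω - gradient F (x j)‖ ^ 2)
      ≤ C * ‖gradient F (x j)‖ ^ 2 + σ ^ 2 / B) :
    (∫ ω, F (xbar - η • ((p : ℝ)⁻¹ • ∑ j, Y j ω))) - Fstar
      ≤ (1 - μ * η) * (F xbar - Fstar)
        + L * η ^ 2 * σ ^ 2 / (2 * p * B)
        + (η / (2 * p)) * (L * η * (C / p + 1) - 1) * ∑ j, ‖gradient F (x j)‖ ^ 2
        + (η * L ^ 2 / (2 * p)) * ∑ j, ‖xbar - x j‖ ^ 2 :=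
  lupa_one_step_descent_general d p hp L μ C σ B η hμ hLμ hη F Fstar hdiff hlip hlb hPL x xbar Ω Y
    hindep hL2 hmean hvar
end

section
/- Let d and p be positive integers, L > 0 and μ > 0 real numbers, and let F : ℝ^d → ℝ be differentiable with L-Lipschitz gradient and satisfying the μ-Polyak-Łojasiewicz condition with respect to a value F*. Let x_1, …, x_p ∈ ℝ^d and x̄ = (1/p)∑_{j=1}^p x_j. Then ⟨∇F(x̄), (1/p)∑_{j=1}^p ∇F(x_j)⟩ ≥ μ(F(x̄) − F*) + (1/(2p))∑_{j=1}^p ‖∇F(x_j)‖² − (L²/(2p))∑_{j=1}^p ‖x̄ − x_j‖². -/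
open scoped BigOperators RealInnerProductSpace

/-- Lower bound on the inner product between the gradient at the
averaged model and the average of the local gradients, for an `L`-smooth function
satisfying the `μ`-Polyak–Łojasiewicz condition with respect to `Fstar`. -/
theorem lupa_inner_product_lower_bound
    (d p : ℕ) (hd : 0 < d) (hp : 0 < p) (L μ : ℝ) (hL : 0 < L) (hμ : 0 < μ)
    (F : EuclideanSpace ℝ (Fin d) → ℝ) (Fstar : ℝ)
    (hdiff : Differentiable ℝ F)
    (hlip : ∀ x y : EuclideanSpace ℝ (Fin d),
      ‖gradient F x - gradient F y‖ ≤ L * ‖x - y‖)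
    (hlb : ∀ x : EuclideanSpace ℝ (Fin d), Fstar ≤ F x)
    (hPL : ∀ x : EuclideanSpace ℝ (Fin d),
      μ * (F x - Fstar) ≤ (1 / 2) * ‖gradient F x‖ ^ 2)
    (x : Fin p → EuclideanSpace ℝ (Fin d))
    (xbar : EuclideanSpace ℝ (Fin d))
    (hxbar : xbar = (p : ℝ)⁻¹ • ∑ j, x j) :
    μ * (F xbar - Fstar) + (1 / (2 * p)) * ∑ j, ‖gradient F (x j)‖ ^ 2
      - (L ^ 2 / (2 * p)) * ∑ j, ‖xbar - x j‖ ^ 2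
      ≤ ⟪gradient F xbar, (p : ℝ)⁻¹ • ∑ j, gradient F (x j)⟫ := by
  set g := gradient F xbar with hg
  have hp' : (0 : ℝ) < (p : ℝ) := by exact_mod_cast hp
  have key : ∀ j : Fin p,
      (1/2) * ‖g‖^2 + (1/2) * ‖gradient F (x j)‖^2 - (L^2/2) * ‖xbar - x j‖^2
        ≤ ⟪g, gradient F (x j)⟫ := by
    intro j
    have h1 := hlip xbar (x j)
    have h2 : ‖g - gradient F (x j)‖^2 ≤ L^2 * ‖xbar - x j‖^2 := by
      have := pow_le_pow_left₀ (norm_nonneg _) h1 2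
      calc ‖g - gradient F (x j)‖^2 ≤ (L * ‖xbar - x j‖)^2 := this
        _ = L^2 * ‖xbar - x j‖^2 := by ring
    have h3 : ‖g - gradient F (x j)‖^2 =
        ‖g‖^2 - 2 * ⟪g, gradient F (x j)⟫ + ‖gradient F (x j)‖^2 := by
      rw [@norm_sub_sq_real]
    linarith
  have hsum : (p : ℝ) * ((1/2) * ‖g‖^2) + (1/2) * ∑ j, ‖gradient F (x j)‖^2
      - (L^2/2) * ∑ j, ‖xbar - x j‖^2 ≤ ∑ j, ⟪g, gradient F (x j)⟫ := by
    have := Finset.sum_le_sum (s := Finset.univ) (fun j _ => key j)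
    simpa [Finset.sum_sub_distrib, Finset.sum_add_distrib, Finset.mul_sum,
      Finset.sum_const, Finset.card_univ, mul_comm] using this
  have hinner : ⟪g, (p : ℝ)⁻¹ • ∑ j, gradient F (x j)⟫
      = (p : ℝ)⁻¹ * ∑ j, ⟪g, gradient F (x j)⟫ := by
    rw [real_inner_smul_right, inner_sum]
  have hPLx := hPL xbar
  rw [hinner]
  have h4 : (p : ℝ)⁻¹ * ((p : ℝ) * ((1/2) * ‖g‖^2) + (1/2) * ∑ j, ‖gradient F (x j)‖^2
      - (L^2/2) * ∑ j, ‖xbar - x j‖^2) ≤ (p : ℝ)⁻¹ * ∑ j, ⟪g, gradient F (x j)⟫ :=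
    mul_le_mul_of_nonneg_left hsum (by positivity)
  have hpinv : (p : ℝ)⁻¹ * (p : ℝ) = 1 := inv_mul_cancel₀ hp'.ne'
  have e1 : (1 / (2 * (p:ℝ))) = (p:ℝ)⁻¹ * (1/2) := by field_simp
  have e2 : (L^2 / (2 * (p:ℝ))) = (p:ℝ)⁻¹ * (L^2/2) := by field_simp
  have h5 : (p : ℝ)⁻¹ * ((p : ℝ) * ((1/2) * ‖g‖^2) + (1/2) * ∑ j, ‖gradient F (x j)‖^2
      - (L^2/2) * ∑ j, ‖xbar - x j‖^2)
      = (1/2) * ‖g‖^2 + (p : ℝ)⁻¹ * (1/2) * ∑ j, ‖gradient F (x j)‖^2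
        - (p : ℝ)⁻¹ * (L^2/2) * ∑ j, ‖xbar - x j‖^2 := by
    field_simp
  rw [h5] at h4
  rw [e1, e2]
  have e1' : (p:ℝ)⁻¹ * (1/2) * ∑ j, ‖gradient F (x j)‖^2
      = (p:ℝ)⁻¹ * ((1/2) * ∑ j, ‖gradient F (x j)‖^2) := by ring
  have e2' : (p:ℝ)⁻¹ * (L^2/2) * ∑ j, ‖xbar - x j‖^2
      = (p:ℝ)⁻¹ * ((L^2/2) * ∑ j, ‖xbar - x j‖^2) := by ring
  linarith
end

section
/- Let d, p and r be positive integers, C ≥ 0, σ ≥ 0, B > 0, and η_1, …, η_r ≥ 0 real numbers. Let {Y_j^k : 1 ≤ j ≤ p, 1 ≤ k ≤ r} be mutually independent, square-integrable random vectors in ℝ^d on a probability space, with means m_j^k = 𝔼[Y_j^k] and 𝔼[‖Y_j^k − m_j^k‖²] ≤ C‖m_j^k‖² + σ²/B. Fix x_0 ∈ ℝ^d, set x_j = x_0 − ∑_{k=1}^r η_k Y_j^k for each j, and x̄ = (1/p)∑_{j=1}^p x_j. Then ∑_{j=1}^p 𝔼[‖x̄ − x_j‖²] ≤ 2·((p+1)/p)·(C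 + 2r)·∑_{k=1}^r η_k² ∑_{j=1}^p ‖m_j^k‖² + 2(p+1)·∑_{k=1}^r η_k²·σ²/B. -/
/-!
The average `x̄` minimises `y ↦ ∑ⱼ ‖y - xⱼ‖²`, so comparing with `y = x₀` bounds the deviation
by `∑ⱼ 𝔼‖∑ₖ ηₖ Yⱼᵏ‖²`. For fixed `j` the `Yⱼᵏ` are independent, so cross terms of the centred
parts vanish and `𝔼‖∑ₖ ηₖ Yⱼᵏ‖² = ‖∑ₖ ηₖ mⱼᵏ‖² + ∑ₖ ηₖ² 𝔼‖Yⱼᵏ - mⱼᵏ‖²`; Cauchy–Schwarz on the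
first term and the variance bound on the second give
`(C + r) ∑ₖ ηₖ² ∑ⱼ ‖mⱼᵏ‖² + p ∑ₖ ηₖ² σ²/B`, which is below the stated bound.
-/

open MeasureTheory ProbabilityTheory Finset
open scoped RealInnerProductSpace

section Centroid

variable {ι E : Type*} [NormedAddCommGroup E] [InnerProductSpace ℝ E]

theorem sum_norm_centroid_sub_sq_le (s : Finset ι) (x : ι → E) (y : E) :
    ∑ j ∈ s, ‖(#s : ℝ)⁻¹ • ∑ i ∈ s, x i - x j‖ ^ 2 ≤ ∑ j ∈ s, ‖y - x j‖ ^ 2 := by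
  rcases s.eq_empty_or_nonempty with rfl | hs
  · simp
  set a := (#s : ℝ)⁻¹ • ∑ i ∈ s, x i
  have hcross : ∑ j ∈ s, ⟪y - a, a - x j⟫ = 0 := by
    rw [← inner_sum, sum_sub_distrib, sum_const, ← Nat.cast_smul_eq_nsmul ℝ, smul_smul,
      mul_inv_cancel₀ (by positivity), one_smul, sub_self, inner_zero_right]
  have huygens : ∑ j ∈ s, ‖y - x j‖ ^ 2 = #s * ‖y - a‖ ^ 2 + ∑ j ∈ s, ‖a - x j‖ ^ 2 := by
    rw [sum_congr rfl fun j _ => by rw [← sub_add_sub_cancel y a (x j), norm_add_sq_real],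
      sum_add_distrib, sum_add_distrib, ← mul_sum, hcross, sum_const, nsmul_eq_mul]
    ring
  rw [huygens]
  exact le_add_of_nonneg_left (by positivity)

theorem sum_integral_norm_centroid_sub_sq_le {Ω : Type*} {mΩ : MeasurableSpace Ω}
    {μ : Measure Ω} [IsFiniteMeasure μ] (s : Finset ι) {x : ι → Ω → E}
    (hx : ∀ j ∈ s, MemLp (x j) 2 μ) (y : E) :
    ∑ j ∈ s, ∫ ω, ‖(#s : ℝ)⁻¹ • ∑ i ∈ s, x i ω - x j ω‖ ^ 2 ∂μ
      ≤ ∑ j ∈ s, ∫ ω, ‖y - x j ω‖ ^ 2 ∂μ := by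
  have hcentroid : MemLp (fun ω => (#s : ℝ)⁻¹ • ∑ i ∈ s, x i ω) 2 μ :=
    (memLp_finsetSum s hx).const_smul _
  have hdev : ∀ j ∈ s, Integrable (fun ω => ‖(#s : ℝ)⁻¹ • ∑ i ∈ s, x i ω - x j ω‖ ^ 2) μ :=
    fun j hj => (hcentroid.sub (hx j hj)).integrable_norm_pow two_ne_zero
  have hdist : ∀ j ∈ s, Integrable (fun ω => ‖y - x j ω‖ ^ 2) μ :=
    fun j hj => ((memLp_const y).sub (hx j hj)).integrable_norm_pow two_ne_zero
  rw [← integral_finsetSum s hdev, ← integral_finsetSum s hdist]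
  exact integral_mono (integrable_finsetSum s hdev) (integrable_finsetSum s hdist)
    fun ω => sum_norm_centroid_sub_sq_le s (x · ω) y

end Centroid

section SecondMoment

variable {Ω E : Type*} {mΩ : MeasurableSpace Ω} {μ : Measure Ω}
  [NormedAddCommGroup E] [InnerProductSpace ℝ E] [CompleteSpace E]

theorem integral_norm_sq_eq_norm_sq_add_integral_norm_sub_sq [IsProbabilityMeasure μ]
    {X : Ω → E} {m : E} (hX : MemLp X 2 μ) (hm : ∫ ω, X ω ∂μ = m) :
    ∫ ω, ‖X ω‖ ^ 2 ∂μ = ‖m‖ ^ 2 + ∫ ω, ‖X ω - m‖ ^ 2 ∂μ := by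
  have hX₁ : Integrable X μ := hX.integrable one_le_two
  have hcentered : Integrable (fun ω => X ω - m) μ := hX₁.sub (integrable_const m)
  have hsq : Integrable (fun ω => ‖X ω - m‖ ^ 2) μ :=
    (hX.sub (memLp_const m)).integrable_norm_pow two_ne_zero
  have hlin : Integrable (fun ω => ‖m‖ ^ 2 + 2 * ⟪m, X ω - m⟫) μ :=
    (integrable_const _).add ((hcentered.const_inner m).const_mul 2)
  have hcross : ∫ ω, ⟪m, X ω - m⟫ ∂μ = 0 := by
    rw [integral_inner hcentered, integral_sub hX₁ (integrable_const m), hm]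
    simp
  calc ∫ ω, ‖X ω‖ ^ 2 ∂μ
      = ∫ ω, (‖m‖ ^ 2 + 2 * ⟪m, X ω - m⟫ + ‖X ω - m‖ ^ 2) ∂μ := by
        simp_rw [← norm_add_sq_real, add_sub_cancel]
    _ = ‖m‖ ^ 2 + ∫ ω, ‖X ω - m‖ ^ 2 ∂μ := by
        rw [integral_add hlin hsq,
          integral_add (integrable_const _) ((hcentered.const_inner m).const_mul 2),
          integral_const_mul, hcross]
        simp

variable [MeasurableSpace E] [BorelSpace E] {ι : Type*} [Fintype ι]

theorem integral_norm_sum_sq_of_pairwise_indepFun_of_integral_eq_zero [IsFiniteMeasure μ]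
    {Z : ι → Ω → E} (hindep : Pairwise fun a b => IndepFun (Z a) (Z b) μ)
    (hZ : ∀ a, MemLp (Z a) 2 μ) (hcentered : ∀ a, ∫ ω, Z a ω ∂μ = 0) :
    ∫ ω, ‖∑ a, Z a ω‖ ^ 2 ∂μ = ∑ a, ∫ ω, ‖Z a ω‖ ^ 2 ∂μ := by
  have hexpand : ∀ ω, ‖∑ a, Z a ω‖ ^ 2 = ∑ a, ∑ b, ⟪Z a ω, Z b ω⟫ := fun ω => by
    simp_rw [← real_inner_self_eq_norm_sq, sum_inner, inner_sum]
  have hint : ∀ a b, Integrable (fun ω => ⟪Z a ω, Z b ω⟫) μ := by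
    intro a b
    rcases eq_or_ne a b with rfl | hab
    · simpa only [real_inner_self_eq_norm_sq] using (hZ a).integrable_norm_pow two_ne_zero
    · exact (hindep hab).integrable_bilin ((hZ a).integrable one_le_two)
        ((hZ b).integrable one_le_two) (innerSL ℝ)
  have horth : ∀ a b, a ≠ b → ∫ ω, ⟪Z a ω, Z b ω⟫ ∂μ = 0 := fun a b hab => by
    refine ((hindep hab).integral_bilin ((hZ a).integrable one_le_two)
      ((hZ b).integrable one_le_two) (innerSL ℝ)).trans ?_
    simp [hcentered]
  simp_rw [hexpand]
  rw [integral_finsetSum _ fun a _ => integrable_finsetSum _ fun b _ => hint a b]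
  refine sum_congr rfl fun a _ => ?_
  rw [integral_finsetSum _ fun b _ => hint a b,
    sum_eq_single a (fun b _ hba => horth a b hba.symm) (by simp)]
  simp_rw [real_inner_self_eq_norm_sq]

theorem integral_norm_sum_sq_of_pairwise_indepFun_s3 [IsProbabilityMeasure μ] {X : ι → Ω → E}
    {m : ι → E} (hindep : Pairwise fun a b => IndepFun (X a) (X b) μ)
    (hX : ∀ a, MemLp (X a) 2 μ) (hm : ∀ a, ∫ ω, X a ω ∂μ = m a) :
    ∫ ω, ‖∑ a, X a ω‖ ^ 2 ∂μ = ‖∑ a, m a‖ ^ 2 + ∑ a, ∫ ω, ‖X a ω - m a‖ ^ 2 ∂μ := by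
  have hsum : ∫ ω, ∑ a, X a ω ∂μ = ∑ a, m a := by
    rw [integral_finsetSum _ fun a _ => (hX a).integrable one_le_two]
    exact sum_congr rfl fun a _ => hm a
  have hcentered : ∀ a, ∫ ω, X a ω - m a ∂μ = 0 := fun a => by
    rw [integral_sub ((hX a).integrable one_le_two) (integrable_const _), hm]
    simp
  have hvar : ∫ ω, ‖∑ a, (X a ω - m a)‖ ^ 2 ∂μ = ∑ a, ∫ ω, ‖X a ω - m a‖ ^ 2 ∂μ :=
    integral_norm_sum_sq_of_pairwise_indepFun_of_integral_eq_zero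
      (fun a b hab => (hindep hab).comp (measurable_id.sub_const (m a))
        (measurable_id.sub_const (m b)))
      (fun a => (hX a).sub (memLp_const (m a))) hcentered
  have hS : MemLp (fun ω => ∑ a, X a ω) 2 μ := memLp_finsetSum _ fun a _ => hX a
  rw [integral_norm_sq_eq_norm_sq_add_integral_norm_sub_sq hS hsum, ← hvar]
  simp only [sum_sub_distrib]

theorem integral_norm_sum_smul_sq_le [IsProbabilityMeasure μ] {Y : ι → Ω → E} {m : ι → E}
    (hindep : Pairwise fun a b => IndepFun (Y a) (Y b) μ) (hY : ∀ a, MemLp (Y a) 2 μ)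
    (hm : ∀ a, ∫ ω, Y a ω ∂μ = m a) (η V : ι → ℝ)
    (hV : ∀ a, ∫ ω, ‖Y a ω - m a‖ ^ 2 ∂μ ≤ V a) :
    ∫ ω, ‖∑ a, η a • Y a ω‖ ^ 2 ∂μ
      ≤ Fintype.card ι * ∑ a, η a ^ 2 * ‖m a‖ ^ 2 + ∑ a, η a ^ 2 * V a := by
  have hsplit := integral_norm_sum_sq_of_pairwise_indepFun_s3
    (X := fun a ω => η a • Y a ω) (m := fun a => η a • m a)
    (fun a b hab => (hindep hab).comp (measurable_const_smul (η a)) (measurable_const_smul (η b)))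
    (fun a => (hY a).const_smul (η a)) (fun a => by rw [integral_smul, hm])
  have hmean : ‖∑ a, η a • m a‖ ^ 2 ≤ Fintype.card ι * ∑ a, η a ^ 2 * ‖m a‖ ^ 2 :=
    calc ‖∑ a, η a • m a‖ ^ 2 ≤ (∑ a, ‖η a • m a‖) ^ 2 := by gcongr; exact norm_sum_le _ _
      _ ≤ Fintype.card ι * ∑ a, ‖η a • m a‖ ^ 2 := sq_sum_le_card_mul_sum_sq
      _ = Fintype.card ι * ∑ a, η a ^ 2 * ‖m a‖ ^ 2 := by
        simp only [norm_smul, mul_pow, Real.norm_eq_abs, sq_abs]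
  have hfluct : ∀ a, ∫ ω, ‖η a • Y a ω - η a • m a‖ ^ 2 ∂μ ≤ η a ^ 2 * V a := fun a => by
    simp_rw [← smul_sub, norm_smul, mul_pow, Real.norm_eq_abs, sq_abs]
    rw [integral_const_mul]
    exact mul_le_mul_of_nonneg_left (hV a) (sq_nonneg _)
  rw [hsplit]
  exact add_le_add hmean (sum_le_sum fun a _ => hfluct a)

end SecondMoment

theorem lupa_local_model_deviation_general
    (d p r : ℕ) (hp : 0 < p)
    (C σ B : ℝ) (hC : 0 ≤ C) (hB : 0 < B)
    (η : Fin r → ℝ)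
    (Ω : Type*) [MeasureSpace Ω] [IsProbabilityMeasure (ℙ : Measure Ω)]
    (Y : Fin p × Fin r → Ω → EuclideanSpace ℝ (Fin d))
    (hindep : iIndepFun Y ℙ)
    (hL2 : ∀ jk, MemLp (Y jk) 2 ℙ)
    (m : Fin p × Fin r → EuclideanSpace ℝ (Fin d))
    (hmean : ∀ jk, (∫ ω, Y jk ω) = m jk)
    (hvar : ∀ jk, (∫ ω, ‖Y jk ω - m jk‖ ^ 2) ≤ C * ‖m jk‖ ^ 2 + σ ^ 2 / B)
    (x₀ : EuclideanSpace ℝ (Fin d))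
    (x : Fin p → Ω → EuclideanSpace ℝ (Fin d))
    (hx : ∀ j ω, x j ω = x₀ - ∑ k, η k • Y (j, k) ω)
    (xbar : Ω → EuclideanSpace ℝ (Fin d))
    (hxbar : ∀ ω, xbar ω = (p : ℝ)⁻¹ • ∑ j, x j ω) :
    ∑ j, (∫ ω, ‖xbar ω - x j ω‖ ^ 2)
      ≤ 2 * (((p : ℝ) + 1) / p) * (C + 2 * r) * ∑ k, η k ^ 2 * ∑ j, ‖m (j, k)‖ ^ 2
        + 2 * ((p : ℝ) + 1) * ∑ k, η k ^ 2 * (σ ^ 2 / B) := by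
  set S : Fin p → Ω → EuclideanSpace ℝ (Fin d) := fun j ω => ∑ k, η k • Y (j, k) ω
  have hS : ∀ j, MemLp (S j) 2 ℙ :=
    fun j => memLp_finsetSum _ fun k _ => (hL2 (j, k)).const_smul (η k)
  obtain rfl : x = fun j ω => x₀ - S j ω := funext fun j => funext (hx j)
  obtain rfl : xbar = fun ω => (p : ℝ)⁻¹ • ∑ j, (x₀ - S j ω) := funext hxbar
  have hcentroid := sum_integral_norm_centroid_sub_sq_le (μ := ℙ) univ
    (x := fun j ω => x₀ - S j ω) (fun j _ => (memLp_const x₀).sub (hS j)) x₀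
  simp only [card_univ, Fintype.card_fin, sub_sub_cancel] at hcentroid
  have hmoment : ∀ j, ∫ ω, ‖S j ω‖ ^ 2
      ≤ r * ∑ k, η k ^ 2 * ‖m (j, k)‖ ^ 2 + ∑ k, η k ^ 2 * (C * ‖m (j, k)‖ ^ 2 + σ ^ 2 / B) :=
    fun j => by
      simpa using integral_norm_sum_smul_sq_le (fun k l hkl => hindep.indepFun (by simpa using hkl))
        (fun k => hL2 (j, k)) (fun k => hmean (j, k)) η _ (fun k => hvar (j, k))
  calc _ ≤ ∑ j, ∫ ω, ‖S j ω‖ ^ 2 := hcentroid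
    _ ≤ _ := sum_le_sum fun j _ => hmoment j
    _ = (C + r) * ∑ k, η k ^ 2 * ∑ j, ‖m (j, k)‖ ^ 2 + p * ∑ k, η k ^ 2 * (σ ^ 2 / B) := by
      simp only [mul_sum, ← sum_add_distrib]
      rw [sum_comm]
      refine sum_congr rfl fun k _ => ?_
      rw [show (p : ℝ) * (η k ^ 2 * (σ ^ 2 / B)) = ∑ _j : Fin p, η k ^ 2 * (σ ^ 2 / B) by simp,
        ← sum_add_distrib]
      exact sum_congr rfl fun j _ => by ring
    _ ≤ _ := by
      have hp' : (1 : ℝ) ≤ p := by exact_mod_cast hp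
      have hq : 1 ≤ ((p : ℝ) + 1) / p := by rw [le_div_iff₀ (by positivity)]; linarith
      have hcoef : C + r ≤ 2 * (((p : ℝ) + 1) / p) * (C + 2 * r) := by
        nlinarith [mul_le_mul_of_nonneg_right hq (by positivity : (0 : ℝ) ≤ C + 2 * r)]
      have hnoise : 0 ≤ ∑ k, η k ^ 2 * (σ ^ 2 / B) :=
        sum_nonneg fun k _ => mul_nonneg (sq_nonneg _) (div_nonneg (sq_nonneg σ) hB.le)
      exact add_le_add (mul_le_mul_of_nonneg_right hcoef (by positivity))
        (mul_le_mul_of_nonneg_right (by linarith) hnoise)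

/-- Deviation of the local models from their average after `r` local
stochastic gradient steps from a common starting point `x₀` with step sizes `η k`,
for mutually independent stochastic gradients `Y j k` that are unbiased estimators of
`m j k` with variance bounded by `C‖m j k‖² + σ²/B`. -/
theorem lupa_local_model_deviation
    (d p r : ℕ) (hd : 0 < d) (hp : 0 < p) (hr : 0 < r)
    (C σ B : ℝ) (hC : 0 ≤ C) (hσ : 0 ≤ σ) (hB : 0 < B)
    (η : Fin r → ℝ) (hη : ∀ k, 0 ≤ η k)
    (Ω : Type*) [MeasureSpace Ω] [IsProbabilityMeasure (ℙ : Measure Ω)]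
    (Y : Fin p × Fin r → Ω → EuclideanSpace ℝ (Fin d))
    (hindep : iIndepFun Y ℙ)
    (hL2 : ∀ jk, MemLp (Y jk) 2 ℙ)
    (m : Fin p × Fin r → EuclideanSpace ℝ (Fin d))
    (hmean : ∀ jk, (∫ ω, Y jk ω) = m jk)
    (hvar : ∀ jk, (∫ ω, ‖Y jk ω - m jk‖ ^ 2) ≤ C * ‖m jk‖ ^ 2 + σ ^ 2 / B)
    (x₀ : EuclideanSpace ℝ (Fin d))
    (x : Fin p → Ω → EuclideanSpace ℝ (Fin d))
    (hx : ∀ j ω, x j ω = x₀ - ∑ k, η k • Y (j, k) ω)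
    (xbar : Ω → EuclideanSpace ℝ (Fin d))
    (hxbar : ∀ ω, xbar ω = (p : ℝ)⁻¹ • ∑ j, x j ω) :
    ∑ j, (∫ ω, ‖xbar ω - x j ω‖ ^ 2)
      ≤ 2 * (((p : ℝ) + 1) / p) * (C + 2 * r) * ∑ k, η k ^ 2 * ∑ j, ‖m (j, k)‖ ^ 2
        + 2 * ((p : ℝ) + 1) * ∑ k, η k ^ 2 * (σ ^ 2 / B) :=
  lupa_local_model_deviation_general d p r hp C σ B hC hB η Ω Y hindep hL2 m hmean hvar x₀ x hx xbar
    hxbar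
end

section
/- Let p and τ be positive integers, let L ≥ μ > 0 and C ≥ 0, D > 0 be real numbers, and set κ = L/μ and M = 4(L(C/p + 1) − μ)/(μτ). Suppose Q := (pτ/(32(p+1)κ²(C+τ)))·D·(M + D) > 1. Then for every real α with α ≥ max(4/ln Q, M + D), one has L(C/p + 1) + ((p+1)/p)·(8L²/μ)·(C + τ)·(1/α)·e^{4/α} ≤ μ(ατ + 4)/4. -/
/-- The key real inequality in the choice-of-learning-rate lemma:
if `α ≥ max (4 / ln Q) (M + D)` with `M = 4(L(C/p+1) − μ)/(μτ)`, `κ = L/μ` and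
`Q = (pτ/(32(p+1)κ²(C+τ)))·D·(M+D) > 1`, then the required bound on the initial
learning rate holds. -/
theorem lupa_learning_rate_inequality
    (p τ : ℕ) (hp : 0 < p) (hτ : 0 < τ)
    (L μ C D : ℝ) (hμ : 0 < μ) (hLμ : μ ≤ L) (hC : 0 ≤ C) (hD : 0 < D)
    (κ M Q : ℝ)
    (hκ : κ = L / μ)
    (hM : M = 4 * (L * (C / p + 1) - μ) / (μ * τ))
    (hQ : Q = ((p : ℝ) * τ / (32 * ((p : ℝ) + 1) * κ ^ 2 * (C + τ))) * D * (M + D))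
    (hQ1 : 1 < Q) :
    ∀ α : ℝ, max (4 / Real.log Q) (M + D) ≤ α →
      L * (C / p + 1)
        + (((p : ℝ) + 1) / p) * (8 * L ^ 2 / μ) * (C + τ) * (1 / α) * Real.exp (4 / α)
        ≤ μ * (α * τ + 4) / 4 := by
  intro α hα
  obtain ⟨hα1, hα2⟩ := max_le_iff.mp hα
  have hp' : (0:ℝ) < p := by exact_mod_cast hp
  have hτ' : (0:ℝ) < τ := by exact_mod_cast hτ
  have hL : (0:ℝ) < L := lt_of_lt_of_le hμ hLμ
  have hCτ : (0:ℝ) < C + τ := by linarith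
  have hlogQ : 0 < Real.log Q := Real.log_pos hQ1
  have hα0 : 0 < α := lt_of_lt_of_le (by positivity) hα1
  -- M ≥ 0
  have hM0 : 0 ≤ M := by
    rw [hM]
    have h1 : μ ≤ L * (C / p + 1) := by
      have h0 : (0:ℝ) ≤ C / p := by positivity
      nlinarith
    have : 0 ≤ L * (C / p + 1) - μ := by linarith
    positivity
  -- exp bound
  have hE : Real.exp (4 / α) ≤ Q := by
    rw [← Real.exp_log (lt_trans one_pos hQ1)]
    apply Real.exp_le_exp.mpr
    rw [div_le_iff₀ hα0]
    have := (div_le_iff₀ hlogQ).mp hα1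
    nlinarith
  have hE0 : 0 < Real.exp (4 / α) := Real.exp_pos _
  obtain ⟨E, hEdef⟩ : ∃ E, Real.exp (4 / α) = E := ⟨_, rfl⟩
  rw [hEdef] at hE hE0 ⊢
  obtain ⟨K, hKdef⟩ : ∃ K, (((p : ℝ) + 1) / p) * (8 * L ^ 2 / μ) * (C + τ) = K := ⟨_, rfl⟩
  rw [hKdef]
  have hK0 : 0 < K := by rw [← hKdef]; positivity
  have hQval : Q * K = μ * τ * D * (M + D) / 4 := by
    rw [hQ, hκ, ← hKdef]
    field_simp
    ring
  have h2 : D * (M + D) ≤ α * (α - M) := by nlinarith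
  have hMval : L * (C / p + 1) = μ * τ * M / 4 + μ := by
    rw [hM]; field_simp; ring
  have hEK : E * K ≤ μ * τ * D * (M + D) / 4 := by
    calc E * K ≤ Q * K := mul_le_mul_of_nonneg_right hE hK0.le
    _ = μ * τ * D * (M + D) / 4 := hQval
  have key : K * (1 / α) * E ≤ μ * τ * (α - M) / 4 := by
    have h4 : E * K ≤ μ * τ * (α - M) / 4 * α := by
      have h5 : μ * τ / 4 * (D * (M + D)) ≤ μ * τ / 4 * (α * (α - M)) :=
        mul_le_mul_of_nonneg_left h2 (by positivity)
      linarith only [h5, hEK]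
    have h3 : K * (1 / α) * E = (E * K) / α := by
      ring
    rw [h3]
    exact (div_le_iff₀ hα0).mpr h4
  rw [hMval]
  linarith only [key]
end

section
/- Let μ > 0 and a > 0 be real numbers, and let τ and T be integers with T ≥ τ ≥ 1. For a nonnegative integer t set η_t = 4/(μ(t + a)). Then ∑_{k=0}^{T−1} (k + a)³ · η_k · η_{⌊k/τ⌋τ}² ≤ (64/μ³) · [ τ + τ(τ−1)/a + τ(τ−1)(2τ−1)/(6a²) + 4(T − τ) ]. -/
open scoped BigOperators

lemma lupa_sumsq (a : ℝ) (n : ℕ) : ∑ k ∈ Finset.range n, ((k:ℝ)+a)^2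
    = (n:ℝ)*a^2 + (n:ℝ)*((n:ℝ)-1)*a + (n:ℝ)*((n:ℝ)-1)*(2*(n:ℝ)-1)/6 := by
  induction n with
  | zero => simp
  | succ n ih => rw [Finset.sum_range_succ, ih]; push_cast; ring

/-- The second weighted sum bound: for the learning rate
`η t = 4/(μ(t+a))` and averaging period `τ`,
`∑_{k=0}^{T−1} (k+a)³ η_k η_{⌊k/τ⌋τ}² ≤ (64/μ³)[τ + τ(τ−1)/a + τ(τ−1)(2τ−1)/(6a²) + 4(T−τ)]`. -/
theorem lupa_second_weighted_sum (μ a : ℝ) (hμ : 0 < μ) (ha : 0 < a)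
    (τ T : ℕ) (hτ : 1 ≤ τ) (hT : τ ≤ T)
    (η : ℕ → ℝ) (hη : ∀ t : ℕ, η t = 4 / (μ * ((t : ℝ) + a))) :
    ∑ k ∈ Finset.range T, ((k : ℝ) + a) ^ 3 * η k * η (k / τ * τ) ^ 2
      ≤ (64 / μ ^ 3) *
        ((τ : ℝ) + (τ : ℝ) * ((τ : ℝ) - 1) / a
          + (τ : ℝ) * ((τ : ℝ) - 1) * (2 * (τ : ℝ) - 1) / (6 * a ^ 2)
          + 4 * ((T : ℝ) - (τ : ℝ))) := by
  have hμ3 : (0:ℝ) < μ ^ 3 := by positivity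
  rw [Finset.range_eq_Ico, ← Finset.sum_Ico_consecutive _ (Nat.zero_le τ) hT]
  -- first sum: exact computation
  have hS1 : ∑ k ∈ Finset.Ico 0 τ, ((k : ℝ) + a) ^ 3 * η k * η (k / τ * τ) ^ 2
      = (64 / μ ^ 3) * ((τ : ℝ) + (τ : ℝ) * ((τ : ℝ) - 1) / a
          + (τ : ℝ) * ((τ : ℝ) - 1) * (2 * (τ : ℝ) - 1) / (6 * a ^ 2)) := by
    rw [← Finset.range_eq_Ico]
    have h1 : ∀ k ∈ Finset.range τ, ((k : ℝ) + a) ^ 3 * η k * η (k / τ * τ) ^ 2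
        = (64 / (μ ^ 3 * a ^ 2)) * (((k:ℝ) + a) ^ 2) := by
      intro k hk
      rw [Finset.mem_range] at hk
      rw [Nat.div_eq_of_lt hk, Nat.zero_mul, hη, hη]
      have hka : (0:ℝ) < (k:ℝ) + a := by positivity
      push_cast
      field_simp
      ring
    rw [Finset.sum_congr rfl h1, ← Finset.mul_sum, lupa_sumsq]
    field_simp
  rw [hS1]
  have hS2 : ∑ k ∈ Finset.Ico τ T, ((k : ℝ) + a) ^ 3 * η k * η (k / τ * τ) ^ 2
      ≤ ((T - τ : ℕ) : ℝ) * (256 / μ ^ 3) := by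
    have hcard : (Finset.Ico τ T).card = T - τ := Nat.card_Ico τ T
    calc ∑ k ∈ Finset.Ico τ T, ((k : ℝ) + a) ^ 3 * η k * η (k / τ * τ) ^ 2
        ≤ ∑ k ∈ Finset.Ico τ T, (256 / μ ^ 3) := by
          apply Finset.sum_le_sum
          intro k hk
          rw [Finset.mem_Ico] at hk
          set m := k / τ * τ with hm
          have hτm : τ ≤ m := by
            have : 1 ≤ k / τ := (Nat.one_le_div_iff (by omega)).mpr hk.1
            calc τ = 1 * τ := (one_mul τ).symm
              _ ≤ k / τ * τ := Nat.mul_le_mul_right τ this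
          have hk2m : k < 2 * m := by
            have hmod : m + k % τ = k := by rw [hm, Nat.mul_comm (k/τ) τ]; exact Nat.div_add_mod k τ
            have : k % τ < τ := Nat.mod_lt k (by omega)
            omega
          have hkm : ((k:ℝ) + a) ≤ 2 * ((m:ℝ) + a) := by
            have : (k:ℝ) ≤ 2 * (m:ℝ) := by exact_mod_cast Nat.le_of_lt hk2m
            linarith
          have hka : (0:ℝ) < (k:ℝ) + a := by positivity
          have hma : (0:ℝ) < (m:ℝ) + a := by positivity
          rw [hη, hη]
          have key : ((k:ℝ)+a)^2 ≤ 4*((m:ℝ)+a)^2 := by nlinarith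
          rw [div_pow, mul_pow]
          have expand : ((k : ℝ) + a) ^ 3 * (4 / (μ * ((k:ℝ) + a))) *
              (4 ^ 2 / (μ ^ 2 * ((m:ℝ) + a) ^ 2))
              = (64 / μ ^ 3) * (((k:ℝ)+a)^2 / ((m:ℝ)+a)^2) := by
            field_simp
            ring
          rw [expand]
          have : ((k:ℝ)+a)^2 / ((m:ℝ)+a)^2 ≤ 4 := by
            rw [div_le_iff₀ (by positivity)]
            linarith
          calc (64 / μ ^ 3) * (((k:ℝ)+a)^2 / ((m:ℝ)+a)^2)
              ≤ (64 / μ ^ 3) * 4 := by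
                apply mul_le_mul_of_nonneg_left this (by positivity)
            _ = 256 / μ ^ 3 := by ring
        _ = ((T - τ : ℕ) : ℝ) * (256 / μ ^ 3) := by
            rw [Finset.sum_const, hcard, nsmul_eq_mul]
  have hcast : ((T - τ : ℕ) : ℝ) = (T:ℝ) - (τ:ℝ) := by
    push_cast [Nat.cast_sub hT]; ring
  rw [hcast] at hS2
  have : (64 / μ ^ 3) * ((τ : ℝ) + (τ : ℝ) * ((τ : ℝ) - 1) / a
      + (τ : ℝ) * ((τ : ℝ) - 1) * (2 * (τ : ℝ) - 1) / (6 * a ^ 2)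
      + 4 * ((T : ℝ) - (τ : ℝ)))
    = (64 / μ ^ 3) * ((τ : ℝ) + (τ : ℝ) * ((τ : ℝ) - 1) / a
      + (τ : ℝ) * ((τ : ℝ) - 1) * (2 * (τ : ℝ) - 1) / (6 * a ^ 2))
      + ((T:ℝ) - (τ:ℝ)) * (256 / μ ^ 3) := by ring
  rw [this]
  linarith
end

section
/- Let p, B, τ, T be positive integers with T ≥ τ, let L ≥ μ > 0, σ ≥ 0 and a ≥ 4 be real numbers, and set κ = L/μ. For a nonnegative integer t set η_t = 4/(μ(t + a)), t_c(t) = ⌊t/τ⌋·τ, and A_t = (η_t L σ²/(pB)) · ( η_t/2 + (L(p+1)/p)·∑_{k=t_c(t)+1}^{t−1} η_k² ). Suppose ζ : ℕ → ℝ is nonnegative and satisfies ζ(t+1) ≤ (1 − μη_t)·ζ(t) + A_t for all 0 ≤ t ≤ T−1. Then ζ(T) ≤ (a³/(T + a − 1)³)·ζ(0) + 4κσ²T(T + 2a)/(μpB(T + a − 1)³) + (64κ²σ²(p+1)(τ−1)/(μp²B(T + a − 1)³)) · [ τ + τ(τ−1)/a + τ(τ−1)(2τ−1)/(6a²) + 4(T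 − τ) ]. -/
/-!
Multiplying the recursion by `(t + a)³` and using `x³ (1 - 4/x) ≤ (x - 1)³` makes
`(t + a - 1)³ ζ(t)` telescope, so `(T + a - 1)³ ζ(T)` is at most `(a - 1)³ ζ(0)` plus the
weighted noise `∑_{s<T} (s + a)³ A_s`. With `η_s = 4/(μ(s + a))` each weighted noise term is
a multiple of `s + a` plus a multiple of the drift weight `∑_k ((s + a)/(k + a))²` over the
at most `τ - 1` local steps since the last synchronization. Inside the first period every ratio
is at most `(1 + s/a)²`; afterwards `k` is at least half of `s`, so every ratio is at most `4`.
-/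

namespace LupaSGD

open Finset

lemma pow_three_mul_one_sub_four_div_le {x : ℝ} (hx : 1 ≤ x) :
    x ^ 3 * (1 - 4 / x) ≤ (x - 1) ^ 3 := by
  have hx0 : x ≠ 0 := by positivity
  rw [mul_one_sub, show x ^ 3 * (4 / x) = 4 * x ^ 2 by field_simp]
  nlinarith

lemma cube_mul_le_of_le_one_sub_four_div_mul {ζ A : ℕ → ℝ} {a : ℝ} (ha : 1 ≤ a)
    (hζ : ∀ t, 0 ≤ ζ t) {T : ℕ}
    (hrec : ∀ t < T, ζ (t + 1) ≤ (1 - 4 / ((t : ℝ) + a)) * ζ t + A t) :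
    ((T : ℝ) + a - 1) ^ 3 * ζ T ≤ (a - 1) ^ 3 * ζ 0 + ∑ s ∈ range T, ((s : ℝ) + a) ^ 3 * A s := by
  induction T with
  | zero => simp
  | succ t ih =>
    have hx : 1 ≤ (t : ℝ) + a := by linarith [t.cast_nonneg (α := ℝ)]
    have hstep := mul_le_mul_of_nonneg_left (hrec t t.lt_succ_self)
      (by positivity : 0 ≤ ((t : ℝ) + a) ^ 3)
    have hcontract := mul_le_mul_of_nonneg_right (pow_three_mul_one_sub_four_div_le hx) (hζ t)
    have ih := ih fun s hs => hrec s (hs.trans t.lt_succ_self)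
    rw [sum_range_succ]
    push_cast
    rw [show (t : ℝ) + 1 + a - 1 = t + a by ring]
    nlinarith

lemma sum_range_cast_add (n : ℕ) (a : ℝ) :
    ∑ s ∈ range n, ((s : ℝ) + a) = n * (n - 1) / 2 + n * a := by
  induction n with
  | zero => simp
  | succ n ih => rw [sum_range_succ, ih]; push_cast; ring

lemma sum_range_one_add_div_sq (n : ℕ) {a : ℝ} (ha : a ≠ 0) :
    ∑ s ∈ range n, (1 + (s : ℝ) / a) ^ 2
      = n + n * (n - 1) / a + n * (n - 1) * (2 * n - 1) / (6 * a ^ 2) := by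
  induction n with
  | zero => simp
  | succ n ih => rw [sum_range_succ, ih]; push_cast; field_simp; ring

lemma card_Ico_since_sync_le {τ : ℕ} (hτ : 0 < τ) (s : ℕ) :
    #(Ico (s / τ * τ + 1) s) ≤ τ - 1 := by
  have hdiv := Nat.div_add_mod' s τ
  have hmod := Nat.mod_lt s hτ
  rw [Nat.card_Ico]
  omega

lemma cube_mul_noise_eq {μ L σ P B x : ℝ} (hμ : μ ≠ 0) (hP : P ≠ 0) (hB : B ≠ 0) (hx : x ≠ 0)
    (K : Finset ℕ) (y : ℕ → ℝ) (hy : ∀ k ∈ K, y k ≠ 0) :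
    x ^ 3 * (4 / (μ * x) * L * σ ^ 2 / (P * B)
        * (4 / (μ * x) / 2 + L * (P + 1) / P * ∑ k ∈ K, (4 / (μ * y k)) ^ 2))
      = 8 * (L / μ) * σ ^ 2 / (μ * P * B) * x
        + 64 * (L / μ) ^ 2 * σ ^ 2 * (P + 1) / (μ * P ^ 2 * B) * ∑ k ∈ K, (x / y k) ^ 2 := by
  have hsum : ∑ k ∈ K, (4 / (μ * y k)) ^ 2 = 16 / (μ ^ 2 * x ^ 2) * ∑ k ∈ K, (x / y k) ^ 2 := by
    rw [mul_sum]
    refine sum_congr rfl fun k hk => ?_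
    have := hy k hk
    field_simp
    ring
  rw [hsum]
  field_simp
  ring

/-- `∑_{k = t_c(s)+1}^{s-1} ((s + a)/(k + a))²`, i.e. `(s + a)² ∑ η_k² / (16/μ²)`: the drift part
of the weighted noise at step `s`. -/
noncomputable def driftWeight (τ : ℕ) (a : ℝ) (s : ℕ) : ℝ :=
  ∑ k ∈ Ico (s / τ * τ + 1) s, (((s : ℝ) + a) / ((k : ℝ) + a)) ^ 2

section driftWeight

variable {τ : ℕ} {a : ℝ}

lemma driftWeight_le_of_forall_le (hτ : 0 < τ) {s : ℕ} {c : ℝ} (hc : 0 ≤ c)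
    (h : ∀ k ∈ Ico (s / τ * τ + 1) s, (((s : ℝ) + a) / ((k : ℝ) + a)) ^ 2 ≤ c) :
    driftWeight τ a s ≤ (τ - 1) * c := by
  have hcard : (#(Ico (s / τ * τ + 1) s) : ℝ) ≤ (τ : ℝ) - 1 := by
    have := card_Ico_since_sync_le hτ s
    rw [← Nat.cast_pred hτ]
    exact_mod_cast this
  calc driftWeight τ a s ≤ #(Ico (s / τ * τ + 1) s) * c := by
        rw [← nsmul_eq_mul]; exact sum_le_card_nsmul _ _ _ h
    _ ≤ (τ - 1) * c := mul_le_mul_of_nonneg_right hcard hc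

lemma driftWeight_le (hτ : 0 < τ) (ha : 0 < a) (s : ℕ) :
    driftWeight τ a s ≤ (τ - 1) * (1 + (s : ℝ) / a) ^ 2 := by
  refine driftWeight_le_of_forall_le hτ (by positivity) fun k _ => ?_
  rw [one_add_div ha.ne', add_comm a]
  gcongr
  exact le_add_of_nonneg_left k.cast_nonneg

lemma driftWeight_le_of_le (hτ : 0 < τ) (ha : 0 < a) {s : ℕ} (hs : τ ≤ s) :
    driftWeight τ a s ≤ (τ - 1) * 4 := by
  refine driftWeight_le_of_forall_le hτ (by norm_num) fun k hk => ?_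
  have hdiv := Nat.div_add_mod' s τ
  have hmod := Nat.mod_lt s hτ
  have hquot := Nat.le_div_iff_mul_le hτ |>.mpr (by omega : 1 * τ ≤ s)
  have hks : s ≤ 2 * k := by
    rw [mem_Ico] at hk
    nlinarith
  have hk0 : 0 < (k : ℝ) + a := by positivity
  rw [div_pow, div_le_iff₀ (by positivity)]
  have : (s : ℝ) ≤ 2 * k := by exact_mod_cast hks
  nlinarith

lemma sum_range_driftWeight_le (hτ : 0 < τ) (ha : 0 < a) {T : ℕ} (hT : τ ≤ T) :
    ∑ s ∈ range T, driftWeight τ a s ≤ (τ - 1) * (τ + τ * (τ - 1) / a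
      + τ * (τ - 1) * (2 * τ - 1) / (6 * a ^ 2) + 4 * ((T : ℝ) - τ)) := by
  have hfirst : ∑ s ∈ range τ, driftWeight τ a s
      ≤ (τ - 1) * (τ + τ * (τ - 1) / a + τ * (τ - 1) * (2 * τ - 1) / (6 * a ^ 2)) := by
    rw [← sum_range_one_add_div_sq τ ha.ne', mul_sum]
    exact sum_le_sum fun s _ => driftWeight_le hτ ha s
  have hlater : ∑ s ∈ Ico τ T, driftWeight τ a s ≤ ((T : ℝ) - τ) * ((τ - 1) * 4) := by
    rw [← Nat.cast_sub hT, ← Nat.card_Ico, ← nsmul_eq_mul]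
    exact sum_le_card_nsmul _ _ _ fun s hs => driftWeight_le_of_le hτ ha (mem_Ico.mp hs).1
  rw [← sum_range_add_sum_Ico _ hT]
  linarith

end driftWeight

end LupaSGD

open LupaSGD Finset

theorem lupa_main_convergence_general
    (p B τ T : ℕ) (hp : 0 < p) (hB : 0 < B) (hτ : 0 < τ) (hT : τ ≤ T)
    (L μ σ a : ℝ) (hμ : 0 < μ) (hLμ : μ ≤ L) (ha : 4 ≤ a)
    (κ : ℝ) (hκ : κ = L / μ)
    (η : ℕ → ℝ) (hη : ∀ t : ℕ, η t = 4 / (μ * ((t : ℝ) + a)))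
    (tc : ℕ → ℕ) (htc : ∀ t : ℕ, tc t = t / τ * τ)
    (A : ℕ → ℝ)
    (hA : ∀ t : ℕ, A t = (η t * L * σ ^ 2 / ((p : ℝ) * B)) *
      (η t / 2 + (L * ((p : ℝ) + 1) / p) * ∑ k ∈ Finset.Ico (tc t + 1) t, η k ^ 2))
    (ζ : ℕ → ℝ) (hζ : ∀ t : ℕ, 0 ≤ ζ t)
    (hrec : ∀ t : ℕ, t < T → ζ (t + 1) ≤ (1 - μ * η t) * ζ t + A t) :
    ζ T ≤ (a ^ 3 / ((T : ℝ) + a - 1) ^ 3) * ζ 0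
      + 4 * κ * σ ^ 2 * T * ((T : ℝ) + 2 * a) / (μ * p * B * ((T : ℝ) + a - 1) ^ 3)
      + (64 * κ ^ 2 * σ ^ 2 * ((p : ℝ) + 1) * ((τ : ℝ) - 1)
          / (μ * (p : ℝ) ^ 2 * B * ((T : ℝ) + a - 1) ^ 3)) *
        ((τ : ℝ) + (τ : ℝ) * ((τ : ℝ) - 1) / a
          + (τ : ℝ) * ((τ : ℝ) - 1) * (2 * (τ : ℝ) - 1) / (6 * a ^ 2)
          + 4 * ((T : ℝ) - (τ : ℝ))) := by
  subst hκ
  have hL : 0 < L := hμ.trans_le hLμ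
  have hpos (t : ℕ) : 0 < (t : ℝ) + a := by positivity
  have hunrolled := cube_mul_le_of_le_one_sub_four_div_mul (by linarith) hζ fun t ht => by
    rw [show 4 / ((t : ℝ) + a) = μ * η t by rw [hη]; field_simp]
    exact hrec t ht
  have hnoise (s : ℕ) : ((s : ℝ) + a) ^ 3 * A s = 8 * (L / μ) * σ ^ 2 / (μ * p * B) * (s + a)
      + 64 * (L / μ) ^ 2 * σ ^ 2 * (p + 1) / (μ * p ^ 2 * B) * driftWeight τ a s := by
    rw [hA, htc, driftWeight]
    simp only [hη]
    exact cube_mul_noise_eq hμ.ne' (by positivity) (by positivity) (hpos s).ne' _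
      (fun k => (k : ℝ) + a) fun k _ => (hpos k).ne'
  have hnoise_sum : ∑ s ∈ range T, ((s : ℝ) + a) ^ 3 * A s
      ≤ 8 * (L / μ) * σ ^ 2 / (μ * p * B) * (T * (T + 2 * a) / 2)
        + 64 * (L / μ) ^ 2 * σ ^ 2 * (p + 1) / (μ * p ^ 2 * B) * ((τ - 1) * ((τ : ℝ)
          + τ * (τ - 1) / a + τ * (τ - 1) * (2 * τ - 1) / (6 * a ^ 2) + 4 * ((T : ℝ) - τ))) := by
    simp only [hnoise]
    rw [sum_add_distrib, ← mul_sum, ← mul_sum, sum_range_cast_add]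
    gcongr
    · nlinarith [T.cast_nonneg (α := ℝ)]
    · exact sum_range_driftWeight_le hτ (by positivity) hT
  have hζ0 : (a - 1) ^ 3 * ζ 0 ≤ a ^ 3 * ζ 0 := by
    gcongr <;> linarith [hζ 0]
  have hD : 0 < ((T : ℝ) + a - 1) ^ 3 := pow_pos (by linarith [T.cast_nonneg (α := ℝ)]) 3
  refine ((le_div_iff₀' hD).mpr (hunrolled.trans (add_le_add hζ0 hnoise_sum))).trans_eq ?_
  field_simp
  ring

/-- Analytic core of the main convergence theorem for LUPA-SGD:
a nonnegative sequence `ζ` satisfying the per-iteration recursion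
`ζ(t+1) ≤ (1 − μη_t)ζ(t) + A_t`, with learning rate `η t = 4/(μ(t+a))` and noise term
`A_t` accumulating the variance since the last synchronization time `⌊t/τ⌋τ`,
obeys the stated convergence bound. -/
theorem lupa_main_convergence
    (p B τ T : ℕ) (hp : 0 < p) (hB : 0 < B) (hτ : 0 < τ) (hT : τ ≤ T) (hT0 : 0 < T)
    (L μ σ a : ℝ) (hμ : 0 < μ) (hLμ : μ ≤ L) (hσ : 0 ≤ σ) (ha : 4 ≤ a)
    (κ : ℝ) (hκ : κ = L / μ)
    (η : ℕ → ℝ) (hη : ∀ t : ℕ, η t = 4 / (μ * ((t : ℝ) + a)))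
    (tc : ℕ → ℕ) (htc : ∀ t : ℕ, tc t = t / τ * τ)
    (A : ℕ → ℝ)
    (hA : ∀ t : ℕ, A t = (η t * L * σ ^ 2 / ((p : ℝ) * B)) *
      (η t / 2 + (L * ((p : ℝ) + 1) / p) * ∑ k ∈ Finset.Ico (tc t + 1) t, η k ^ 2))
    (ζ : ℕ → ℝ) (hζ : ∀ t : ℕ, 0 ≤ ζ t)
    (hrec : ∀ t : ℕ, t < T → ζ (t + 1) ≤ (1 - μ * η t) * ζ t + A t) :
    ζ T ≤ (a ^ 3 / ((T : ℝ) + a - 1) ^ 3) * ζ 0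
      + 4 * κ * σ ^ 2 * T * ((T : ℝ) + 2 * a) / (μ * p * B * ((T : ℝ) + a - 1) ^ 3)
      + (64 * κ ^ 2 * σ ^ 2 * ((p : ℝ) + 1) * ((τ : ℝ) - 1)
          / (μ * (p : ℝ) ^ 2 * B * ((T : ℝ) + a - 1) ^ 3)) *
        ((τ : ℝ) + (τ : ℝ) * ((τ : ℝ) - 1) / a
          + (τ : ℝ) * ((τ : ℝ) - 1) * (2 * (τ : ℝ) - 1) / (6 * a ^ 2)
          + 4 * ((T : ℝ) - (τ : ℝ))) :=
  lupa_main_convergence_general p B τ T hp hB hτ hT L μ σ a hμ hLμ ha κ hκ η hη tc htc A hA ζ hζ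
    hrec
end

section
/- Let p and B be positive integers, let L ≥ μ > 0, σ ≥ 0 and c ≥ 4 be real numbers, and set κ = L/μ. Let E be a positive integer, τ_1, …, τ_E positive integers, T = ∑_{i=1}^E τ_i, s_i = ∑_{l<i} τ_l, and for 0 ≤ t < T let i(t) be the unique index with s_{i(t)} ≤ t < s_{i(t)} + τ_{i(t)} and s(t) = s_{i(t)}. For a nonnegative integer t set η_t = 4/(μ(t + c)) and A_t = (η_t L σ²/(pB)) · ( η_t/2 + (L(p+1)/p)·∑_{k=s(t)+1}^{t−1} η_k² ). Suppose ζ : ℕ → ℝ is nonnegative and satisfies ζ(t+1) ≤ (1 − μη_t)·ζ(t) + A_t for all 0 ≤ t ≤ T−1. Then ζ(T) ≤ (c³/(T + c − 1)³)·ζ(0) + 4κσ²T(T + 2c)/(μpB(T + c − 1)³) + (64κ²σ²(p+1)/(μp²B(T + c − 1)³)) · ∑_{i=1}^E (τ_i − 1)·[ τ_i + τ_i(τ_i−1)/c + τ_i(τ_i−1)(2τ_i−1)/(6c²) ]. -/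
/-!
Since `μ η_t = 4/(t + c)` and `x²(x - 4) ≤ (x - 1)³`, multiplying the recursion by `(t + c)³`
makes it telescope: `(T + c - 1)³ ζ(T) ≤ (c - 1)³ ζ(0) + ∑_{t<T} (t + c)³ A_t`.
The weighted noise `(t + c)³ A_t` is a multiple of `t + c` plus a multiple of
`(t + c)² ∑_k 1/(k + c)²`, the sum running over the local steps `s(t) < k < t` of the current
round. From `(t + c)/(k + c) ≤ 1 + (t - k)/c`, each of the `τ - 1` nonzero such terms of a
round of length `τ` is at most `∑_{m<τ} (1 + m/c)²`, whose closed form gives the bound.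
-/

open Finset

theorem sum_range_one_add_div_sq (c : ℝ) (hc : c ≠ 0) (n : ℕ) :
    ∑ m ∈ range n, (1 + (m : ℝ) / c) ^ 2
      = (n : ℝ) + n * (n - 1) / c + n * (n - 1) * (2 * n - 1) / (6 * c ^ 2) := by
  induction n with
  | zero => simp
  | succ n ih =>
    rw [sum_range_succ, ih]
    push_cast
    field_simp
    ring

theorem sum_range_cast_add_le (c : ℝ) (n : ℕ) :
    ∑ t ∈ range n, ((t : ℝ) + c) ≤ n * (n + 2 * c) / 2 := by
  induction n with
  | zero => simp
  | succ n ih =>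
    rw [sum_range_succ]
    push_cast
    linarith

theorem sum_Ico_eq_sum_range_sum_Ico {M : Type*} [AddCommMonoid M] (f : ℕ → M) {s : ℕ → ℕ}
    (hs : Monotone s) (n : ℕ) :
    ∑ t ∈ Ico (s 0) (s n), f t = ∑ i ∈ range n, ∑ t ∈ Ico (s i) (s (i + 1)), f t := by
  induction n with
  | zero => simp
  | succ n ih =>
    rw [sum_range_succ, ← ih, sum_Ico_consecutive _ (hs n.zero_le) (hs n.le_succ)]

theorem add_div_add_le_one_add_sub_div {c k t : ℝ} (hc : 0 < c) (hk : 0 ≤ k) (hkt : k ≤ t) :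
    (t + c) / (k + c) ≤ 1 + (t - k) / c := by
  rw [div_le_iff₀ (by positivity)]
  have : 0 ≤ k * (t - k) / c := by
    have := sub_nonneg.2 hkt
    positivity
  calc t + c = (1 + (t - k) / c) * (k + c) - k * (t - k) / c := by field_simp; ring
    _ ≤ _ := by linarith

theorem sq_mul_sum_Ico_one_div_sq_le {c : ℝ} (hc : 0 < c) {s τ t : ℕ} (ht : t < s + τ) :
    ((t : ℝ) + c) ^ 2 * ∑ k ∈ Ico (s + 1) t, 1 / ((k : ℝ) + c) ^ 2
      ≤ ∑ m ∈ range τ, (1 + (m : ℝ) / c) ^ 2 := by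
  calc ((t : ℝ) + c) ^ 2 * ∑ k ∈ Ico (s + 1) t, 1 / ((k : ℝ) + c) ^ 2
      ≤ ∑ k ∈ Ico (s + 1) t, (1 + ((t - k : ℕ) : ℝ) / c) ^ 2 := by
        rw [mul_sum]
        refine sum_le_sum fun k hk => ?_
        have hkt : k ≤ t := (mem_Ico.1 hk).2.le
        rw [Nat.cast_sub hkt, mul_one_div, ← div_pow]
        gcongr
        exact add_div_add_le_one_add_sub_div hc k.cast_nonneg (by exact_mod_cast hkt)
    _ = ∑ m ∈ (Ico (s + 1) t).image fun k => t - k, (1 + (m : ℝ) / c) ^ 2 := by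
        rw [sum_image fun a ha b hb hab => ?_]
        simp only [coe_Ico, Set.mem_Ico] at ha hb hab
        omega
    _ ≤ ∑ m ∈ range τ, (1 + (m : ℝ) / c) ^ 2 := by
        refine sum_le_sum_of_subset_of_nonneg (fun m hm => ?_) fun _ _ _ => by positivity
        obtain ⟨k, hk, rfl⟩ := mem_image.1 hm
        rw [mem_Ico] at hk
        rw [mem_range]
        omega

theorem sum_Ico_sq_mul_sum_Ico_one_div_sq_le {c : ℝ} (hc : 0 < c) (s τ : ℕ) :
    ∑ t ∈ Ico s (s + τ), ((t : ℝ) + c) ^ 2 * ∑ k ∈ Ico (s + 1) t, 1 / ((k : ℝ) + c) ^ 2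
      ≤ ((τ : ℝ) - 1) * ∑ m ∈ range τ, (1 + (m : ℝ) / c) ^ 2 := by
  rcases τ with _ | τ
  · simp
  rw [sum_eq_sum_Ico_succ_bot (by omega), Ico_eq_empty_of_le s.le_succ, sum_empty, mul_zero,
    zero_add, Nat.cast_succ, add_sub_cancel_right]
  calc _ ≤ #(Ico (s + 1) (s + (τ + 1))) • ∑ m ∈ range (τ + 1), (1 + (m : ℝ) / c) ^ 2 :=
        sum_le_card_nsmul _ _ _ fun t ht => sq_mul_sum_Ico_one_div_sq_le hc (mem_Ico.1 ht).2
    _ = τ * ∑ m ∈ range (τ + 1), (1 + (m : ℝ) / c) ^ 2 := by simp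

theorem cube_mul_le_of_le_one_sub_four_div {x y y' a : ℝ} (hx : 1 ≤ x) (hy : 0 ≤ y)
    (h : y' ≤ (1 - 4 / x) * y + a) : x ^ 3 * y' ≤ (x - 1) ^ 3 * y + x ^ 3 * a := by
  have hx0 : 0 < x := by linarith
  have hcube : x ^ 2 * (x - 4) ≤ (x - 1) ^ 3 := by nlinarith
  calc x ^ 3 * y' ≤ x ^ 3 * ((1 - 4 / x) * y + a) := by gcongr
    _ = x ^ 2 * (x - 4) * y + x ^ 3 * a := by field_simp
    _ ≤ (x - 1) ^ 3 * y + x ^ 3 * a := by gcongr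

theorem cube_mul_le_of_forall_le_one_sub_four_div {c : ℝ} (hc : 1 ≤ c) {ζ A : ℕ → ℝ}
    (hζ : ∀ t, 0 ≤ ζ t) {T : ℕ}
    (hrec : ∀ t < T, ζ (t + 1) ≤ (1 - 4 / ((t : ℝ) + c)) * ζ t + A t) :
    ((T : ℝ) + c - 1) ^ 3 * ζ T
      ≤ (c - 1) ^ 3 * ζ 0 + ∑ t ∈ range T, ((t : ℝ) + c) ^ 3 * A t := by
  induction T with
  | zero => simp
  | succ n ih =>
    have ih := ih fun t ht => hrec t (by omega)
    have hstep := cube_mul_le_of_le_one_sub_four_div (by linarith [n.cast_nonneg (α := ℝ)])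
      (hζ n) (hrec n n.lt_succ_self)
    rw [sum_range_succ, show ((n + 1 : ℕ) : ℝ) + c - 1 = n + c by push_cast; ring]
    linarith

theorem cube_mul_noise_eq {p B L μ σ c : ℝ} (hp : p ≠ 0) (hB : B ≠ 0) (hμ : μ ≠ 0) (hc : 0 < c)
    {η : ℕ → ℝ} (hη : ∀ t : ℕ, η t = 4 / (μ * ((t : ℝ) + c))) (t : ℕ) (K : Finset ℕ) :
    ((t : ℝ) + c) ^ 3 *
        ((η t * L * σ ^ 2 / (p * B)) * (η t / 2 + (L * (p + 1) / p) * ∑ k ∈ K, η k ^ 2))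
      = 8 * L * σ ^ 2 / (μ ^ 2 * p * B) * ((t : ℝ) + c)
        + 64 * L ^ 2 * σ ^ 2 * (p + 1) / (μ ^ 3 * p ^ 2 * B) *
            (((t : ℝ) + c) ^ 2 * ∑ k ∈ K, 1 / ((k : ℝ) + c) ^ 2) := by
  have hsq : ∑ k ∈ K, η k ^ 2 = 16 / μ ^ 2 * ∑ k ∈ K, 1 / ((k : ℝ) + c) ^ 2 := by
    rw [mul_sum]
    exact sum_congr rfl fun k _ => by
      have hkc : (k : ℝ) + c ≠ 0 := by positivity
      rw [hη]; field_simp; ring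
  have htc : (t : ℝ) + c ≠ 0 := by positivity
  rw [hsq, hη]
  field_simp
  ring

theorem sum_range_sq_mul_sum_Ico_one_div_sq_le {c : ℝ} (hc : 0 < c) {E : ℕ} {τ s st : ℕ → ℕ}
    (hs : ∀ i, s i = ∑ l ∈ range i, τ l)
    (hst : ∀ i < E, ∀ t, s i ≤ t → t < s i + τ i → st t = s i) :
    ∑ t ∈ range (s E), ((t : ℝ) + c) ^ 2 * ∑ k ∈ Ico (st t + 1) t, 1 / ((k : ℝ) + c) ^ 2
      ≤ ∑ i ∈ range E, ((τ i : ℝ) - 1) * ∑ m ∈ range (τ i), (1 + (m : ℝ) / c) ^ 2 := by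
  have hsucc : ∀ i, s (i + 1) = s i + τ i := fun i => by simp only [hs, sum_range_succ]
  have hblocks := sum_Ico_eq_sum_range_sum_Ico
    (fun t => ((t : ℝ) + c) ^ 2 * ∑ k ∈ Ico (st t + 1) t, 1 / ((k : ℝ) + c) ^ 2)
    (monotone_nat_of_le_succ fun i => hsucc i ▸ Nat.le_add_right _ _) E
  rw [hs 0, sum_range_zero, ← range_eq_Ico] at hblocks
  rw [hblocks]
  refine sum_le_sum fun i hi => ?_
  rw [hsucc]
  calc _ = ∑ t ∈ Ico (s i) (s i + τ i),
        ((t : ℝ) + c) ^ 2 * ∑ k ∈ Ico (s i + 1) t, 1 / ((k : ℝ) + c) ^ 2 :=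
        sum_congr rfl fun t ht => by
          obtain ⟨hst₁, hst₂⟩ := mem_Ico.1 ht
          rw [hst i (mem_range.1 hi) t hst₁ hst₂]
    _ ≤ _ := sum_Ico_sq_mul_sum_Ico_one_div_sq_le hc _ _

theorem sum_range_cube_mul_noise_le {p B L μ σ c : ℝ} (hp : 0 < p) (hB : 0 < B) (hL : 0 ≤ L)
    (hμ : 0 < μ) (hc : 0 < c) {η A : ℕ → ℝ} {E : ℕ} {τ s st : ℕ → ℕ}
    (hη : ∀ t : ℕ, η t = 4 / (μ * ((t : ℝ) + c)))
    (hA : ∀ t : ℕ, A t = (η t * L * σ ^ 2 / (p * B)) *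
      (η t / 2 + (L * (p + 1) / p) * ∑ k ∈ Ico (st t + 1) t, η k ^ 2))
    (hs : ∀ i, s i = ∑ l ∈ range i, τ l)
    (hst : ∀ i < E, ∀ t, s i ≤ t → t < s i + τ i → st t = s i) :
    ∑ t ∈ range (s E), ((t : ℝ) + c) ^ 3 * A t
      ≤ 8 * L * σ ^ 2 / (μ ^ 2 * p * B) * (s E * (s E + 2 * c) / 2)
        + 64 * L ^ 2 * σ ^ 2 * (p + 1) / (μ ^ 3 * p ^ 2 * B) *
          ∑ i ∈ range E, ((τ i : ℝ) - 1) *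
            ((τ i : ℝ) + (τ i : ℝ) * ((τ i : ℝ) - 1) / c
              + (τ i : ℝ) * ((τ i : ℝ) - 1) * (2 * (τ i : ℝ) - 1) / (6 * c ^ 2)) := by
  simp_rw [hA, cube_mul_noise_eq hp.ne' hB.ne' hμ.ne' hc hη, sum_add_distrib, ← mul_sum,
    ← sum_range_one_add_div_sq c hc.ne']
  gcongr
  · exact sum_range_cast_add_le c _
  · exact sum_range_sq_mul_sum_Ico_one_div_sq_le hc hs hst

theorem ada_lupa_convergence_general
    (p B : ℕ) (hp : 0 < p) (hB : 0 < B)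
    (L μ σ c : ℝ) (hμ : 0 < μ) (hLμ : μ ≤ L) (hc : 4 ≤ c)
    (κ : ℝ) (hκ : κ = L / μ)
    (E : ℕ) (τ : ℕ → ℕ)
    (T : ℕ) (hT : T = ∑ i ∈ Finset.range E, τ i)
    (s : ℕ → ℕ) (hs : ∀ i, s i = ∑ l ∈ Finset.range i, τ l)
    (st : ℕ → ℕ)
    (hst : ∀ i < E, ∀ t : ℕ, s i ≤ t → t < s i + τ i → st t = s i)
    (η : ℕ → ℝ) (hη : ∀ t : ℕ, η t = 4 / (μ * ((t : ℝ) + c)))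
    (A : ℕ → ℝ)
    (hA : ∀ t : ℕ, A t = (η t * L * σ ^ 2 / ((p : ℝ) * B)) *
      (η t / 2 + (L * ((p : ℝ) + 1) / p) * ∑ k ∈ Finset.Ico (st t + 1) t, η k ^ 2))
    (ζ : ℕ → ℝ) (hζ : ∀ t : ℕ, 0 ≤ ζ t)
    (hrec : ∀ t : ℕ, t < T → ζ (t + 1) ≤ (1 - μ * η t) * ζ t + A t) :
    ζ T ≤ (c ^ 3 / ((T : ℝ) + c - 1) ^ 3) * ζ 0
      + 4 * κ * σ ^ 2 * T * ((T : ℝ) + 2 * c) / (μ * p * B * ((T : ℝ) + c - 1) ^ 3)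
      + (64 * κ ^ 2 * σ ^ 2 * ((p : ℝ) + 1)
          / (μ * (p : ℝ) ^ 2 * B * ((T : ℝ) + c - 1) ^ 3)) *
        ∑ i ∈ Finset.range E, ((τ i : ℝ) - 1) *
          ((τ i : ℝ) + (τ i : ℝ) * ((τ i : ℝ) - 1) / c
            + (τ i : ℝ) * ((τ i : ℝ) - 1) * (2 * (τ i : ℝ) - 1) / (6 * c ^ 2)) := by
  have hc0 : 0 < c := by linarith
  have hweighted : ((T : ℝ) + c - 1) ^ 3 * ζ T
      ≤ (c - 1) ^ 3 * ζ 0 + ∑ t ∈ range T, ((t : ℝ) + c) ^ 3 * A t :=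
    cube_mul_le_of_forall_le_one_sub_four_div (by linarith) hζ fun t ht => by
      have hμη : μ * η t = 4 / ((t : ℝ) + c) := by rw [hη]; field_simp
      rw [← hμη]; exact hrec t ht
  have hnoise := sum_range_cube_mul_noise_le (p := p) (B := B) (by positivity) (by positivity)
    (hμ.le.trans hLμ) hμ hc0 hη hA hs hst
  rw [show s E = T by rw [hs, hT]] at hnoise
  set P := ∑ i ∈ range E, ((τ i : ℝ) - 1) *
    ((τ i : ℝ) + (τ i : ℝ) * ((τ i : ℝ) - 1) / c
      + (τ i : ℝ) * ((τ i : ℝ) - 1) * (2 * (τ i : ℝ) - 1) / (6 * c ^ 2))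
  have hζ0 : (c - 1) ^ 3 * ζ 0 ≤ c ^ 3 * ζ 0 := by
    have := hζ 0
    gcongr <;> linarith
  have hD : 0 < ((T : ℝ) + c - 1) ^ 3 := pow_pos (by linarith [T.cast_nonneg (α := ℝ)]) 3
  refine ((le_div_iff₀' hD).2 (hweighted.trans (add_le_add hζ0 hnoise))).trans_eq ?_
  rw [hκ]
  field_simp
  ring

/-- Analytic core of the convergence theorem for adaptive local SGD
(ADA-LUPA-SGD): a nonnegative sequence `ζ` satisfying the per-iteration recursion
`ζ(t+1) ≤ (1 − μη_t)ζ(t) + A_t`, with learning rate `η t = 4/(μ(t+c))`, communication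
schedule `τ_1, …, τ_E`, synchronization times `s i = ∑_{l<i} τ_l`, `st t` the most
recent synchronization time before iteration `t`, and noise term `A_t` accumulating
the variance contributions since `st t`, obeys the stated convergence bound. -/
theorem ada_lupa_convergence
    (p B : ℕ) (hp : 0 < p) (hB : 0 < B)
    (L μ σ c : ℝ) (hμ : 0 < μ) (hLμ : μ ≤ L) (hσ : 0 ≤ σ) (hc : 4 ≤ c)
    (κ : ℝ) (hκ : κ = L / μ)
    (E : ℕ) (hE : 0 < E) (τ : ℕ → ℕ) (hτ : ∀ i < E, 0 < τ i)
    (T : ℕ) (hT : T = ∑ i ∈ Finset.range E, τ i)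
    (s : ℕ → ℕ) (hs : ∀ i, s i = ∑ l ∈ Finset.range i, τ l)
    (st : ℕ → ℕ)
    (hst : ∀ i < E, ∀ t : ℕ, s i ≤ t → t < s i + τ i → st t = s i)
    (η : ℕ → ℝ) (hη : ∀ t : ℕ, η t = 4 / (μ * ((t : ℝ) + c)))
    (A : ℕ → ℝ)
    (hA : ∀ t : ℕ, A t = (η t * L * σ ^ 2 / ((p : ℝ) * B)) *
      (η t / 2 + (L * ((p : ℝ) + 1) / p) * ∑ k ∈ Finset.Ico (st t + 1) t, η k ^ 2))
    (ζ : ℕ → ℝ) (hζ : ∀ t : ℕ, 0 ≤ ζ t)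
    (hrec : ∀ t : ℕ, t < T → ζ (t + 1) ≤ (1 - μ * η t) * ζ t + A t) :
    ζ T ≤ (c ^ 3 / ((T : ℝ) + c - 1) ^ 3) * ζ 0
      + 4 * κ * σ ^ 2 * T * ((T : ℝ) + 2 * c) / (μ * p * B * ((T : ℝ) + c - 1) ^ 3)
      + (64 * κ ^ 2 * σ ^ 2 * ((p : ℝ) + 1)
          / (μ * (p : ℝ) ^ 2 * B * ((T : ℝ) + c - 1) ^ 3)) *
        ∑ i ∈ Finset.range E, ((τ i : ℝ) - 1) *
          ((τ i : ℝ) + (τ i : ℝ) * ((τ i : ℝ) - 1) / c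
            + (τ i : ℝ) * ((τ i : ℝ) - 1) * (2 * (τ i : ℝ) - 1) / (6 * c ^ 2)) :=
  ada_lupa_convergence_general p B hp hB L μ σ c hμ hLμ hc κ hκ E τ T hT s hs st hst η hη A hA ζ hζ
    hrec
end

section
/- Let a, b, c be real numbers with 2a > 3, c ≥ 0, and b > max( max(c − 3, 0)/(2a − 3) + 1/√(2a − 3), 1 ). Let T be a positive integer and let e : ℕ → ℝ be a nonnegative sequence satisfying e_{t+1} ≤ ( ((t + b)² − 2a(t + b) + c)/(t + b)² )·e_t for all 0 ≤ t ≤ T−1. Then e_T ≤ ((b − 1)³/T³)·e_0. -/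
/-- Recursion lemma for full-batch gradient descent: a nonnegative
sequence contracting by `((t+b)² − 2a(t+b) + c)/(t+b)²` per step decays at rate
`(b−1)³/T³`, under the stated conditions on `a`, `b`, `c`. -/
theorem gd_recursion_lemma (a b c : ℝ) (ha : 3 < 2 * a) (hc : 0 ≤ c)
    (hb : max (max (c - 3) 0 / (2 * a - 3) + 1 / Real.sqrt (2 * a - 3)) 1 < b)
    (T : ℕ) (hT : 0 < T)
    (e : ℕ → ℝ) (he : ∀ t : ℕ, 0 ≤ e t)
    (hrec : ∀ t : ℕ, t < T →
      e (t + 1) ≤ ((((t : ℝ) + b) ^ 2 - 2 * a * ((t : ℝ) + b) + c) / ((t : ℝ) + b) ^ 2) * e t) :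
    e T ≤ ((b - 1) ^ 3 / (T : ℝ) ^ 3) * e 0 := by
  have hb1 : (1:ℝ) < b := lt_of_le_of_lt (le_max_right _ _) hb
  have hs0 : (0:ℝ) < 2 * a - 3 := by linarith
  set r := Real.sqrt (2 * a - 3) with hr
  have hr0 : 0 < r := Real.sqrt_pos.mpr hs0
  have hr2 : r ^ 2 = 2 * a - 3 := Real.sq_sqrt hs0.le
  set m := max (c - 3) 0 with hm
  have hm0 : (0:ℝ) ≤ m := le_max_right _ _
  have hmc : c - 3 ≤ m := le_max_left _ _
  have hbm : m / (2 * a - 3) + 1 / r < b := lt_of_le_of_lt (le_max_left _ _) hb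
  have hfac : ∀ x : ℝ, b ≤ x → x * (x ^ 2 - 2 * a * x + c) ≤ (x - 1) ^ 3 := by
    intro x hx
    have hx0' : m / (2 * a - 3) + 1 / r < x := lt_of_lt_of_le hbm hx
    have hxpos : 0 < x := by
      have : 0 ≤ m / (2 * a - 3) := div_nonneg hm0 hs0.le
      have : 0 < 1 / r := by positivity
      linarith
    have h1 : r ≤ r ^ 2 * x - m := by
      rw [hr2]
      have h2 : (m / (2 * a - 3) + 1 / r) * (2 * a - 3) ≤ x * (2 * a - 3) :=
        mul_le_mul_of_nonneg_right hx0'.le hs0.le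
      have h3 : m / (2 * a - 3) * (2 * a - 3) = m := by field_simp
      have h4 : 1 / r * (2 * a - 3) = r := by
        rw [← hr2]; field_simp
      nlinarith
    have h5 : 1 ≤ r * x := by
      have : 1 / r ≤ x := by
        have : 0 ≤ m / (2 * a - 3) := div_nonneg hm0 hs0.le
        linarith
      calc (1:ℝ) = r * (1 / r) := by field_simp
        _ ≤ r * x := mul_le_mul_of_nonneg_left this hr0.le
    nlinarith [mul_le_mul_of_nonneg_left h1 hxpos.le,
      mul_le_mul_of_nonneg_right hmc hxpos.le, hr2]
  have key : ∀ t, t ≤ T → e t ≤ (b - 1) ^ 3 / ((t : ℝ) + b - 1) ^ 3 * e 0 := by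
    intro t
    induction t with
    | zero =>
      intro _
      have hbne : ((b:ℝ) - 1) ^ 3 ≠ 0 := by
        have : (0:ℝ) < b - 1 := by linarith
        positivity
      simp only [Nat.cast_zero, zero_add]
      rw [div_self hbne, one_mul]
    | succ t ih =>
      intro hle
      have htT : t < T := hle
      have ihe := ih htT.le
      set x : ℝ := (t : ℝ) + b with hx
      have hbx : b ≤ x := by
        have : (0:ℝ) ≤ (t:ℝ) := Nat.cast_nonneg t
        simp only [hx]; linarith
      have hx1 : 1 < x := lt_of_lt_of_le hb1 hbx
      have hx0 : 0 < x := by linarith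
      have hxm1 : 0 < x - 1 := by linarith
      have hF : (x ^ 2 - 2 * a * x + c) / x ^ 2 ≤ (x - 1) ^ 3 / x ^ 3 := by
        rw [div_le_div_iff₀ (by positivity) (by positivity)]
        nlinarith [mul_le_mul_of_nonneg_right (hfac x hbx) (sq_nonneg x)]
      have hnn : 0 ≤ (x - 1) ^ 3 / x ^ 3 := by positivity
      calc e (t + 1) ≤ ((x ^ 2 - 2 * a * x + c) / x ^ 2) * e t := hrec t htT
        _ ≤ ((x - 1) ^ 3 / x ^ 3) * e t := mul_le_mul_of_nonneg_right hF (he t)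
        _ ≤ ((x - 1) ^ 3 / x ^ 3) * ((b - 1) ^ 3 / ((t : ℝ) + b - 1) ^ 3 * e 0) :=
            mul_le_mul_of_nonneg_left ihe hnn
        _ = (b - 1) ^ 3 / (((t + 1 : ℕ) : ℝ) + b - 1) ^ 3 * e 0 := by
            have h1 : (t : ℝ) + b - 1 = x - 1 := by simp [hx]
            push_cast
            rw [h1]
            have hxne : x ≠ 0 := ne_of_gt hx0
            have hxm1ne : x - 1 ≠ 0 := ne_of_gt hxm1
            have h2 : ((t:ℝ) + 1) + b - 1 = x := by simp [hx]; ring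
            rw [h2]
            field_simp
  have hTc : (0:ℝ) < (T:ℝ) := by exact_mod_cast hT
  have hfinal := key T le_rfl
  have hle : (b - 1) ^ 3 / ((T : ℝ) + b - 1) ^ 3 ≤ (b - 1) ^ 3 / (T : ℝ) ^ 3 := by
    have hbp : (0:ℝ) < b - 1 := by linarith
    gcongr
    nlinarith [hbp]
  calc e T ≤ (b - 1) ^ 3 / ((T : ℝ) + b - 1) ^ 3 * e 0 := hfinal
    _ ≤ (b - 1) ^ 3 / (T : ℝ) ^ 3 * e 0 := mul_le_mul_of_nonneg_right hle (he 0)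
end

section
/- Let d be a positive integer and L ≥ μ > 0 real numbers, and let f : ℝ^d → ℝ be differentiable with L-Lipschitz gradient and satisfying the μ-Polyak-Łojasiewicz condition with respect to a value f*. Let a, b be real numbers with 2a > 3 and b > max( max(a²L/μ − 3, 0)/(2a − 3) + 1/√(2a − 3), 1 ). Let x^{(0)} ∈ ℝ^d and define the gradient descent iterates x^{(t+1)} = x^{(t)} − η_t ∇f(x^{(t)}) with η_t = a/(μ(t + b)). Then for every positive integer T, f(x^{(T)}) − f* ≤ ((b − 1)³/T³)·(f(x^{(0)}) − f*). -/
/-!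
By the descent lemma and the PL inequality, a gradient step of size `η` with `Lη ≤ 2` contracts
the optimality gap by the factor `1 - 2μη + μLη²`. For `η = a / (μ s)` with `s = t + b` this factor
is at most `((s - 1) / s)³` once `b` is as large as assumed, so the weighted gap
`(t + b - 1)³ (f(x_t) - f*)` is nonincreasing in `t`.
-/

open Set

theorem le_mul_add_three_sub_inv_of_max_lt {k c b : ℝ} (hk : 0 < k)
    (hb : max (max (c - 3) 0 / k + 1 / Real.sqrt k) 1 < b) : c ≤ k * b + 3 - 1 / b := by
  obtain ⟨hbM, hb1⟩ := max_lt_iff.1 hb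
  have hb0 : 0 < b := by linarith
  have hsqrt : 0 < Real.sqrt k := Real.sqrt_pos.2 hk
  have hinv : 1 / b < Real.sqrt k := (one_div_lt hsqrt hb0).1
    ((le_add_of_nonneg_left (div_nonneg (le_max_right _ _) hk.le)).trans_lt hbM)
  have hkb : max (c - 3) 0 + Real.sqrt k < k * b := by
    have := mul_lt_mul_of_pos_left hbM hk
    rwa [mul_add, mul_div_cancel₀ _ hk.ne', mul_one_div, Real.div_sqrt] at this
  linarith [le_max_left (c - 3) 0]

theorem mul_sq_sub_add_le_sub_one_pow_three {a b c s : ℝ} (ha : 3 ≤ 2 * a) (hb : 0 < b)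
    (hbs : b ≤ s) (hc : c ≤ (2 * a - 3) * b + 3 - 1 / b) :
    s * (s ^ 2 - 2 * a * s + c) ≤ (s - 1) ^ 3 := by
  have hs : 0 < s := hb.trans_le hbs
  have hcs : c * s ≤ ((2 * a - 3) * b + 3 - 1 / b) * s := mul_le_mul_of_nonneg_right hc hs.le
  have hsb : 1 ≤ 1 / b * s := by rw [one_div_mul_eq_div, one_le_div hb]; exact hbs
  -- `(s - 1)³ - s (s² - 2as + c) ≥ (2a - 3) s (s - b) + (s / b - 1)`
  nlinarith [mul_nonneg (mul_nonneg (sub_nonneg.2 ha) hs.le) (sub_nonneg.2 hbs)]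

section GradientDescent

variable {E : Type*} [NormedAddCommGroup E] [InnerProductSpace ℝ E] [CompleteSpace E]
  {f : E → ℝ} {L : ℝ}

theorem apply_add_le_of_lipschitz_gradient (hdiff : Differentiable ℝ f)
    (hlip : ∀ x y, ‖gradient f x - gradient f y‖ ≤ L * ‖x - y‖) (x v : E) :
    f (x + v) ≤ f x + inner ℝ (gradient f x) v + L / 2 * ‖v‖ ^ 2 := by
  let g : ℝ → ℝ := fun t ↦ f (x + t • v) - t * inner ℝ (gradient f x) v - L / 2 * t ^ 2 * ‖v‖ ^ 2
  let g' : ℝ → ℝ := fun t ↦ inner ℝ (gradient f (x + t • v) - gradient f x) v - L * t * ‖v‖ ^ 2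
  have hg : ∀ t, HasDerivAt g (g' t) t := by
    intro t
    have hline : HasDerivAt (fun t : ℝ ↦ x + t • v) v t := by
      simpa using ((hasDerivAt_id t).smul_const v).const_add x
    have hf : HasDerivAt (fun t : ℝ ↦ f (x + t • v)) (inner ℝ (gradient f (x + t • v)) v) t :=
      ((hdiff (x + t • v)).hasGradientAt.hasFDerivAt.comp_hasDerivAt t hline :)
    refine ((hf.sub ((hasDerivAt_id t).mul_const (inner ℝ (gradient f x) v))).sub
      (((hasDerivAt_pow 2 t).const_mul (L / 2)).mul_const (‖v‖ ^ 2))).congr_deriv ?_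
    simp only [g', inner_sub_left]
    ring
  have hg'_nonpos : ∀ t ∈ interior (Ici (0 : ℝ)), g' t ≤ 0 := by
    intro t ht
    rw [interior_Ici, mem_Ioi] at ht
    have : inner ℝ (gradient f (x + t • v) - gradient f x) v ≤ L * t * ‖v‖ ^ 2 :=
      calc inner ℝ (gradient f (x + t • v) - gradient f x) v
          ≤ ‖gradient f (x + t • v) - gradient f x‖ * ‖v‖ := real_inner_le_norm _ _
        _ ≤ L * ‖x + t • v - x‖ * ‖v‖ := by gcongr; exact hlip _ _
        _ = L * t * ‖v‖ ^ 2 := by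
          rw [add_sub_cancel_left, norm_smul, Real.norm_of_nonneg ht.le]; ring
    exact sub_nonpos.2 this
  have hanti := antitoneOn_of_hasDerivWithinAt_nonpos (convex_Ici 0)
    (fun t _ ↦ (hg t).continuousAt.continuousWithinAt)
    (fun t _ ↦ (hg t).hasDerivWithinAt) hg'_nonpos
  have h01 : g 1 ≤ g 0 := hanti (mem_Ici.2 le_rfl) (mem_Ici.2 zero_le_one) zero_le_one
  simp only [g, one_smul, zero_smul, add_zero, one_pow, one_mul, zero_mul] at h01
  linarith

theorem apply_sub_smul_gradient_sub_le (hdiff : Differentiable ℝ f)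
    (hlip : ∀ x y, ‖gradient f x - gradient f y‖ ≤ L * ‖x - y‖) {μ fstar η : ℝ} {x : E}
    (hPL : μ * (f x - fstar) ≤ 1 / 2 * ‖gradient f x‖ ^ 2) (hη : 0 ≤ η) (hLη : L * η ≤ 2) :
    f (x - η • gradient f x) - fstar ≤ (1 - 2 * μ * η + μ * L * η ^ 2) * (f x - fstar) := by
  have hdescent := apply_add_le_of_lipschitz_gradient hdiff hlip x (-(η • gradient f x))
  rw [← sub_eq_add_neg, inner_neg_right, real_inner_smul_right, real_inner_self_eq_norm_sq,
    norm_neg, norm_smul, mul_pow, Real.norm_eq_abs, sq_abs] at hdescent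
  have hcoeff : 0 ≤ η * (1 - L * η / 2) := mul_nonneg hη (by linarith)
  nlinarith [mul_le_mul_of_nonneg_left hPL hcoeff]

theorem cube_mul_apply_sub_smul_gradient_sub_le (hdiff : Differentiable ℝ f)
    (hlip : ∀ x y, ‖gradient f x - gradient f y‖ ≤ L * ‖x - y‖) {μ fstar a b s : ℝ} {x : E}
    (hμ : 0 < μ) (hPL : μ * (f x - fstar) ≤ 1 / 2 * ‖gradient f x‖ ^ 2) (hlb : fstar ≤ f x)
    (ha : 3 < 2 * a) (hb : 1 < b) (hbs : b ≤ s)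
    (hc : a ^ 2 * L / μ ≤ (2 * a - 3) * b + 3 - 1 / b) :
    s ^ 3 * (f (x - (a / (μ * s)) • gradient f x) - fstar) ≤ (s - 1) ^ 3 * (f x - fstar) := by
  have ha0 : 0 < a := by linarith
  have hs : 0 < s := by linarith
  have hη : 0 ≤ a / (μ * s) := by positivity
  have hLη : L * (a / (μ * s)) ≤ 2 := by
    have hlt : a * (a * L / μ) < a * (2 * b) := by
      have hinv_pos : 0 < 1 / b := by positivity
      have hsq : a ^ 2 * L / μ = a * (a * L / μ) := by ring
      nlinarith
    have haL : a * L / μ < 2 * s := by linarith [lt_of_mul_lt_mul_left hlt ha0.le]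
    rw [show L * (a / (μ * s)) = a * L / μ / s by field_simp, div_le_iff₀ hs]
    exact haL.le
  have hfactor : s ^ 3 * (1 - 2 * μ * (a / (μ * s)) + μ * L * (a / (μ * s)) ^ 2)
      = s * (s ^ 2 - 2 * a * s + a ^ 2 * L / μ) := by
    field_simp
  calc s ^ 3 * (f (x - (a / (μ * s)) • gradient f x) - fstar)
      ≤ s ^ 3 * ((1 - 2 * μ * (a / (μ * s)) + μ * L * (a / (μ * s)) ^ 2) * (f x - fstar)) :=
        mul_le_mul_of_nonneg_left (apply_sub_smul_gradient_sub_le hdiff hlip hPL hη hLη)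
          (by positivity)
    _ = s * (s ^ 2 - 2 * a * s + a ^ 2 * L / μ) * (f x - fstar) := by rw [← hfactor]; ring
    _ ≤ (s - 1) ^ 3 * (f x - fstar) :=
        mul_le_mul_of_nonneg_right (mul_sq_sub_add_le_sub_one_pow_three ha.le (by linarith) hbs hc)
          (sub_nonneg.2 hlb)

end GradientDescent

theorem gd_pl_cubic_rate_general
    (d : ℕ) (L μ : ℝ) (hμ : 0 < μ)
    (f : EuclideanSpace ℝ (Fin d) → ℝ) (fstar : ℝ)
    (hdiff : Differentiable ℝ f)
    (hlip : ∀ x y : EuclideanSpace ℝ (Fin d),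
      ‖gradient f x - gradient f y‖ ≤ L * ‖x - y‖)
    (hlb : ∀ x : EuclideanSpace ℝ (Fin d), fstar ≤ f x)
    (hPL : ∀ x : EuclideanSpace ℝ (Fin d),
      μ * (f x - fstar) ≤ (1 / 2) * ‖gradient f x‖ ^ 2)
    (a b : ℝ) (ha : 3 < 2 * a)
    (hb : max (max (a ^ 2 * L / μ - 3) 0 / (2 * a - 3) + 1 / Real.sqrt (2 * a - 3)) 1 < b)
    (η : ℕ → ℝ) (hη : ∀ t : ℕ, η t = a / (μ * ((t : ℝ) + b)))
    (x : ℕ → EuclideanSpace ℝ (Fin d))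
    (hiter : ∀ t : ℕ, x (t + 1) = x t - η t • gradient f (x t)) :
    ∀ T : ℕ, 0 < T →
      f (x T) - fstar ≤ ((b - 1) ^ 3 / (T : ℝ) ^ 3) * (f (x 0) - fstar) := by
  intro T hT
  have hb1 : 1 < b := (le_max_right _ _).trans_lt hb
  have hc := le_mul_add_three_sub_inv_of_max_lt (by linarith) hb
  have hstep : ∀ t : ℕ, ((t : ℝ) + b) ^ 3 * (f (x (t + 1)) - fstar)
      ≤ ((t : ℝ) + b - 1) ^ 3 * (f (x t) - fstar) := fun t ↦ by
    rw [hiter, hη]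
    exact cube_mul_apply_sub_smul_gradient_sub_le hdiff hlip hμ (hPL _) (hlb _) ha hb1
      (by linarith [t.cast_nonneg (α := ℝ)]) hc
  have hweighted : Antitone fun t : ℕ ↦ ((t : ℝ) + b - 1) ^ 3 * (f (x t) - fstar) :=
    antitone_nat_of_succ_le fun t ↦ by
      simp only [Nat.cast_succ, add_right_comm _ (1 : ℝ) b, add_sub_cancel_right]
      exact hstep t
  have hTb : (0 : ℝ) < T + b - 1 := by linarith [(Nat.cast_pos (α := ℝ)).2 hT]
  have hgap0 : 0 ≤ f (x 0) - fstar := sub_nonneg.2 (hlb _)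
  calc f (x T) - fstar ≤ (b - 1) ^ 3 * (f (x 0) - fstar) / ((T : ℝ) + b - 1) ^ 3 := by
        rw [le_div_iff₀ (by positivity), mul_comm]
        simpa using hweighted (Nat.zero_le T)
    _ ≤ (b - 1) ^ 3 * (f (x 0) - fstar) / (T : ℝ) ^ 3 := by
        gcongr
        linarith
    _ = (b - 1) ^ 3 / (T : ℝ) ^ 3 * (f (x 0) - fstar) := by ring

/-- Full-batch gradient descent with learning rate
`η_t = a/(μ(t+b))` on an `L`-smooth `μ`-PL function achieves the `O(1/T³)` rate
`f(x^{(T)}) − f* ≤ ((b−1)³/T³)(f(x^{(0)}) − f*)`. -/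
theorem gd_pl_cubic_rate
    (d : ℕ) (hd : 0 < d) (L μ : ℝ) (hμ : 0 < μ) (hLμ : μ ≤ L)
    (f : EuclideanSpace ℝ (Fin d) → ℝ) (fstar : ℝ)
    (hdiff : Differentiable ℝ f)
    (hlip : ∀ x y : EuclideanSpace ℝ (Fin d),
      ‖gradient f x - gradient f y‖ ≤ L * ‖x - y‖)
    (hlb : ∀ x : EuclideanSpace ℝ (Fin d), fstar ≤ f x)
    (hPL : ∀ x : EuclideanSpace ℝ (Fin d),
      μ * (f x - fstar) ≤ (1 / 2) * ‖gradient f x‖ ^ 2)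
    (a b : ℝ) (ha : 3 < 2 * a)
    (hb : max (max (a ^ 2 * L / μ - 3) 0 / (2 * a - 3) + 1 / Real.sqrt (2 * a - 3)) 1 < b)
    (η : ℕ → ℝ) (hη : ∀ t : ℕ, η t = a / (μ * ((t : ℝ) + b)))
    (x : ℕ → EuclideanSpace ℝ (Fin d))
    (hiter : ∀ t : ℕ, x (t + 1) = x t - η t • gradient f (x t)) :
    ∀ T : ℕ, 0 < T →
      f (x T) - fstar ≤ ((b - 1) ^ 3 / (T : ℝ) ^ 3) * (f (x 0) - fstar) :=
  gd_pl_cubic_rate_general d L μ hμ f fstar hdiff hlip hlb hPL a b ha hb η hη x hiter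
end
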